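/- arXiv:1410.5989 — 6 statements merged into one kernel-verified Lean document; each statement's English description precedes it below -/
import Mathlib

section
/- A finite p-group is metahamiltonian if and only if every minimal non-abelian subgroup of it is normal. -/
/-!
Assume every minimal non-abelian subgroup is normal and induct on a non-abelian subgroup `H`
that is not minimal non-abelian. Its proper non-abelian subgroups are normal by induction, hence
so is their join `M`, and it suffices to show `M = H`.

Suppose `M < H`, so every proper non-abelian subgroup of the `p`-group `H` lies in the proper
normal subgroup `M`. For `x ∉ M` and `y` not commuting with `x`, the non-abelian subgroup
`⟨x, y⟩` is not contained in `M`, so `⟨x, y⟩ = H`. Hence for a non-central `x ∉ M` the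
centralizer `C = C(x)` is an abelian maximal, thus normal, subgroup. A non-commuting pair in `M`
can be moved to `a ∈ M \ C`, `b' ∈ C ∩ M`; then `x a ∉ M` does not commute with `b'`, so
`H = ⟨x a, b'⟩` and `H / (C ∩ M)` is cyclic. The subgroups between `C ∩ M` and `H` then form a
chain, yet `x ∈ C \ M` and `a ∈ M \ C`.
-/

open Subgroup

theorem IsCyclic.le_of_card_dvd {α : Type*} [Group α] [Finite α] [IsCyclic α]
    {A B : Subgroup α} (h : Nat.card A ∣ Nat.card B) : A ≤ B := by
  classical
  cases nonempty_fintype α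
  have hroots : {g : α | g ^ Nat.card B = 1} = B := by
    refine (Set.eq_of_subset_of_ncard_le (fun g hg => ?_) ?_ (Set.toFinite _)).symm
    · exact orderOf_dvd_iff_pow_eq_one.mp (B.orderOf_dvd_natCard hg)
    · rw [← Nat.card_coe_set_eq (B : Set α), SetLike.coe_sort_coe]
      simpa [Set.ncard_eq_toFinset_card'] using
        IsCyclic.card_pow_eq_one_le (α := α) (Nat.card_pos (α := B))
  intro a ha
  rw [← SetLike.mem_coe, ← hroots]
  exact orderOf_dvd_iff_pow_eq_one.mp ((A.orderOf_dvd_natCard ha).trans h)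

theorem IsPGroup.le_total_of_isCyclic {p : ℕ} [Fact p.Prime] {α : Type*} [Group α] [Finite α]
    [IsCyclic α] (hα : IsPGroup p α) (A B : Subgroup α) : A ≤ B ∨ B ≤ A := by
  obtain ⟨m, hm⟩ := IsPGroup.iff_card.mp (hα.to_subgroup A)
  obtain ⟨n, hn⟩ := IsPGroup.iff_card.mp (hα.to_subgroup B)
  rcases le_total m n with h | h
  · exact .inl (IsCyclic.le_of_card_dvd (by rw [hm, hn]; exact pow_dvd_pow p h))
  · exact .inr (IsCyclic.le_of_card_dvd (by rw [hm, hn]; exact pow_dvd_pow p h))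

namespace Subgroup

variable {G : Type*} [Group G]

theorem not_isMulCommutative_of_not_commute {H : Subgroup G} {a b : G} (ha : a ∈ H)
    (hb : b ∈ H) (hab : ¬Commute a b) : ¬IsMulCommutative H :=
  fun _ => hab (setLike_mul_comm ha hb)

theorem exists_not_commute_of_not_isMulCommutative {H : Subgroup G}
    (hH : ¬IsMulCommutative H) : ∃ a ∈ H, ∃ b ∈ H, ¬Commute a b := by
  simpa [isMulCommutative_iff_of_setLike, Commute, SemiconjBy] using hH

theorem exists_notMem_notMem_center {M : Subgroup G} (hM : M ≠ ⊤) {a : G} (ha : a ∈ M)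
    (haZ : a ∉ center G) : ∃ x ∉ M, x ∉ center G := by
  obtain ⟨u, hu⟩ : ∃ u, u ∉ M := by simpa [eq_top_iff'] using hM
  by_cases huZ : u ∈ center G
  · exact ⟨u * a, (M.mul_mem_cancel_right ha).not.mpr hu,
      ((center G).mul_mem_cancel_left huZ).not.mpr haZ⟩
  · exact ⟨u, hu, huZ⟩

theorem exists_mem_inf_not_commute_of_isCoatom {C K : Subgroup G} [C.Normal] (hC : IsCoatom C)
    {a b : G} (ha : a ∈ K) (haC : a ∉ C) (hb : b ∈ K) (hab : ¬Commute a b) :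
    ∃ b' ∈ C ⊓ K, ¬Commute a b' := by
  have hsup : C ⊔ zpowers a = ⊤ :=
    hC.2 _ (left_lt_sup.mpr fun h => haC (h (mem_zpowers a)))
  obtain ⟨b', hb'C, _, ⟨k, rfl⟩, rfl⟩ := mem_sup_of_normal_left.mp (hsup ▸ mem_top b)
  refine ⟨b', ⟨hb'C, ?_⟩, fun h => hab (h.mul_right ((Commute.refl a).zpow_right k))⟩
  simpa using K.mul_mem hb (K.zpow_mem (K.inv_mem ha) k)

theorem isCyclic_quotient_of_closure_pair_eq_top {N : Subgroup G} [N.Normal] {c b : G}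
    (hcb : closure {c, b} = ⊤) (hb : b ∈ N) : IsCyclic (G ⧸ N) := by
  refine ⟨⟨c, fun q => ?_⟩⟩
  obtain ⟨g, rfl⟩ := QuotientGroup.mk'_surjective N q
  have hle : closure {c, b} ≤ (zpowers (c : G ⧸ N)).comap (QuotientGroup.mk' N) := by
    rw [closure_le]
    rintro z (rfl | rfl)
    · exact mem_zpowers _
    · simp [(QuotientGroup.eq_one_iff z).mpr hb]
  exact mem_zpowers_iff.mp (hle (hcb ▸ mem_top g))

theorem closure_pair_eq_top_of_notMem {M : Subgroup G}
    (hM : ∀ R : Subgroup G, R ≠ ⊤ → ¬IsMulCommutative R → R ≤ M) {x y : G} (hx : x ∉ M)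
    (hxy : ¬Commute x y) : closure {x, y} = ⊤ := by
  by_contra hne
  have hxmem : x ∈ closure {x, y} := subset_closure (by simp)
  exact hx (hM _ hne (not_isMulCommutative_of_not_commute hxmem
    (subset_closure (by simp)) hxy) hxmem)

theorem isCoatom_centralizer_of_notMem {M : Subgroup G}
    (hM : ∀ R : Subgroup G, R ≠ ⊤ → ¬IsMulCommutative R → R ≤ M) {x : G} (hx : x ∉ M)
    (hxZ : x ∉ center G) : IsCoatom (centralizer {x}) := by
  refine ⟨fun h => hxZ ?_, fun T hT => ?_⟩
  · exact mem_center_iff.mpr fun g => mem_centralizer_singleton_iff.mp (h ▸ mem_top g)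
  · obtain ⟨y, hyT, hyC⟩ := SetLike.exists_of_lt hT
    have hxy : ¬Commute x y := fun h => hyC (mem_centralizer_singleton_iff.mpr h.symm.eq)
    rw [eq_top_iff, ← closure_pair_eq_top_of_notMem hM hx hxy, closure_le]
    rintro z (rfl | rfl)
    · exact hT.le (mem_centralizer_singleton_iff.mpr rfl)
    · exact hyT

theorem isMulCommutative_centralizer_of_notMem {M : Subgroup G}
    (hM : ∀ R : Subgroup G, R ≠ ⊤ → ¬IsMulCommutative R → R ≤ M) {x : G} (hx : x ∉ M)
    (hxZ : x ∉ center G) : IsMulCommutative (centralizer {x}) :=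
  not_not.mp fun h => hx <|
    hM _ (isCoatom_centralizer_of_notMem hM hx hxZ).1 h (mem_centralizer_singleton_iff.mpr rfl)

end Subgroup

namespace IsPGroup

variable {p : ℕ} [Fact p.Prime] {G : Type*} [Group G] [Finite G]

theorem le_total_of_isCyclic_quotient (hG : IsPGroup p G) {N : Subgroup G} [N.Normal]
    [IsCyclic (G ⧸ N)] {A B : Subgroup G} (hA : N ≤ A) (hB : N ≤ B) : A ≤ B ∨ B ≤ A := by
  have hker : (QuotientGroup.mk' N).ker = N := QuotientGroup.ker_mk' N
  refine (hG.to_quotient N).le_total_of_isCyclic (A.map (QuotientGroup.mk' N))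
    (B.map (QuotientGroup.mk' N)) |>.imp (fun h => ?_) (fun h => ?_)
  · simpa [Subgroup.map_le_map_iff, hker, sup_of_le_left hB] using h
  · simpa [Subgroup.map_le_map_iff, hker, sup_of_le_left hA] using h

theorem isMulCommutative_of_forall_nonabelian_le (hG : IsPGroup p G) {M : Subgroup G}
    [M.Normal] (hMtop : M ≠ ⊤) (hM : ∀ R : Subgroup G, R ≠ ⊤ → ¬IsMulCommutative R → R ≤ M)
    {K : Subgroup G} (hK : K ≠ ⊤) : IsMulCommutative K := by
  by_contra hKna
  have hKM := hM K hK hKna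
  obtain ⟨a, haK, b, hbK, hab⟩ := exists_not_commute_of_not_isMulCommutative hKna
  obtain ⟨x, hxM, hxZ⟩ := exists_notMem_notMem_center hMtop (hKM haK)
    fun haZ => hab (mem_center_iff.mp haZ b).symm
  set C := centralizer {x}
  have hxC : x ∈ C := mem_centralizer_singleton_iff.mpr rfl
  have hCmax := isCoatom_centralizer_of_notMem hM hxM hxZ
  have : IsMulCommutative C := isMulCommutative_centralizer_of_notMem hM hxM hxZ
  have : C.Normal :=
    (Group.normalizerCondition_of_isNilpotent (h := hG.isNilpotent)).normal_of_coatom C hCmax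
  wlog haC : a ∉ C generalizing a b
  · exact this b hbK a haK (fun h => hab h.symm)
      fun hbC => hab (setLike_mul_comm (not_not.mp haC) hbC)
  obtain ⟨b', ⟨hb'C, hb'K⟩, hab'⟩ :=
    exists_mem_inf_not_commute_of_isCoatom hCmax haK haC hbK hab
  have hxb' : Commute x b' := (mem_centralizer_singleton_iff.mp hb'C).symm
  have hxaM : x * a ∉ M := (M.mul_mem_cancel_right (hKM haK)).not.mpr hxM
  have hxab' : ¬Commute (x * a) b' := fun h => hab' (by simpa using hxb'.inv_left.mul_left h)
  have := isCyclic_quotient_of_closure_pair_eq_top (N := C ⊓ M)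
    (closure_pair_eq_top_of_notMem hM hxaM hxab') ⟨hb'C, hKM hb'K⟩
  rcases hG.le_total_of_isCyclic_quotient (inf_le_left : C ⊓ M ≤ C) inf_le_right with h | h
  · exact hxM (h hxC)
  · exact haC (h (hKM haK))

theorem isMulCommutative_of_forall_nonabelian_lt_le (hG : IsPGroup p G) {H M : Subgroup G}
    (hMH : M < H) (hHM : H ≤ normalizer (M : Set G))
    (hM : ∀ L < H, ¬IsMulCommutative L → L ≤ M) {K : Subgroup G} (hKH : K < H) :
    IsMulCommutative K := by
  have : (M.subgroupOf H).Normal := (normal_subgroupOf_iff_le_normalizer hMH.le).mpr hHM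
  have hM' : ∀ R : Subgroup H, R ≠ ⊤ → ¬IsMulCommutative R → R ≤ M.subgroupOf H := by
    intro R hR hRna
    rw [← Subgroup.comap_subtype, ← map_le_iff_le_comap]
    refine hM _ ?_ fun _ => hRna ?_
    · simpa only [← MonoidHom.range_eq_map, range_subtype] using
        map_subtype_lt_map_subtype.mpr (lt_top_iff_ne_top.mpr hR)
    · exact comap_map_eq_self_of_injective H.subtype_injective R ▸
        comap_injective_isMulCommutative (H := R.map H.subtype) H.subtype_injective
  have := (hG.to_subgroup H).isMulCommutative_of_forall_nonabelian_le
    (subgroupOf_eq_top.not.mpr hMH.not_ge) hM' (subgroupOf_eq_top.not.mpr hKH.not_ge)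
  rw [← inf_of_le_left hKH.le, ← subgroupOf_map_subtype]
  infer_instance

end IsPGroup

/-- A finite p-group is metahamiltonian (every non-abelian subgroup is normal)
iff every minimal non-abelian subgroup is normal. -/
theorem metahamiltonian_iff_minimal_nonabelian_normal {p : ℕ} (hp : p.Prime)
    (G : Type*) [Group G] [Finite G] (hG : IsPGroup p G) :
    (∀ H : Subgroup G, ¬IsMulCommutative H → H.Normal) ↔
      (∀ H : Subgroup G,
        (¬IsMulCommutative H ∧ ∀ K : Subgroup G, K < H → IsMulCommutative K) → H.Normal) := by
  have := Fact.mk hp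
  refine ⟨fun h H hH => h H hH.1, fun hmin H => ?_⟩
  induction H using WellFoundedLT.induction with
  | _ H ih =>
  intro hH
  by_cases hHmin : ∀ K < H, IsMulCommutative K
  · exact hmin H ⟨hH, hHmin⟩
  obtain ⟨K, hKH, hK⟩ := not_forall₂.mp hHmin
  set M := sSup {L | L < H ∧ ¬IsMulCommutative L}
  have hM : M.Normal := sSup_normal _ fun L hL => ih L hL.1 hL.2
  have hMH : M = H := (sSup_le fun L hL => hL.1.le).eq_of_not_lt fun hMH =>
    hK (hG.isMulCommutative_of_forall_nonabelian_lt_le hMH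
      (le_top.trans (normalizer_eq_top_iff.mpr hM).ge) (fun L hLH hL => le_sSup ⟨hLH, hL⟩) hKH)
  exact hMH ▸ hM
end

section
/- Let G be a finite metahamiltonian p-group. For every x in G, the normal closure of ⟨x⟩ in G is either abelian or minimal non-abelian. -/
/-!
Let `N` be the normal closure of `x` and suppose it is not abelian. A non-abelian subgroup of `N`
is normal in `G`, so if it contains a conjugate of `x` it is all of `N`. Hence `N` is generated
by two conjugates of `x`, and for every conjugate `w` the subgroup `⟨w⟩Φ(N)` is abelian: it
cannot be `N`, as `Φ(N)` consists of non-generators and `N` is not cyclic. So the Frattini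
subgroup `Φ(N)` is central. As `N/Φ(N)` is elementary abelian on two generators, a maximal
subgroup `M` of `N` satisfies `|M : Φ(N)| ≤ p`, so `M` is cyclic modulo a central subgroup and
therefore abelian.
-/

open Subgroup

theorem card_dvd_orderOf_mul_orderOf {G : Type*} [Group G] {a b : G} (hab : Commute a b)
    (h : closure {a, b} = ⊤) : Nat.card G ∣ orderOf a * orderOf b := by
  have comm (m : zpowers a) (n : zpowers b) :
      Commute ((zpowers a).subtype m) ((zpowers b).subtype n) := by
    obtain ⟨i, hi⟩ := mem_zpowers_iff.mp m.2
    obtain ⟨j, hj⟩ := mem_zpowers_iff.mp n.2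
    simpa only [coe_subtype, ← hi, ← hj] using hab.zpow_zpow i j
  have hf : (MonoidHom.noncommCoprod _ _ comm).range = ⊤ := by
    rw [MonoidHom.noncommCoprod_range, range_subtype, range_subtype, zpowers_eq_closure,
      zpowers_eq_closure, ← Subgroup.closure_union, Set.singleton_union, h]
  have := card_dvd_of_surjective _ (MonoidHom.range_eq_top.mp hf)
  rwa [Nat.card_prod, Nat.card_zpowers, Nat.card_zpowers] at this

theorem isMulCommutative_of_le_center_of_relIndex_dvd {G : Type*} [Group G] {p : ℕ}
    [Fact p.Prime] {K L : Subgroup G} (hK : K ≤ center G) (h : K.relIndex L ∣ p) :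
    IsMulCommutative L := by
  have hKL : K.subgroupOf L ≤ center L := fun k hk ↦ mem_center_iff.mpr fun l ↦
    Subtype.ext (mem_center_iff.mp (hK hk) l)
  have : (K.subgroupOf L).Normal :=
    ⟨fun k hk l ↦ by rwa [mem_center_iff.mp (hKL hk) l, mul_inv_cancel_right]⟩
  have : IsCyclic (L ⧸ K.subgroupOf L) := isCyclic_of_card_dvd_prime (p := p) h
  exact (QuotientGroup.mk' (K.subgroupOf L)).isMulCommutative_of_isCyclic_of_ker_le_center
    (by rwa [QuotientGroup.ker_mk'])

namespace IsPGroup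

variable {p : ℕ} [Fact p.Prime] {G : Type*} [Group G] [Finite G] (hG : IsPGroup p G)
include hG

theorem normal_of_isCoatom {M : Subgroup G} (hM : IsCoatom M) : M.Normal :=
  have := hG.isNilpotent
  NormalizerCondition.normal_of_coatom M Group.normalizerCondition_of_isNilpotent hM

theorem card_quotient_of_isCoatom {M : Subgroup G} [M.Normal] (hM : IsCoatom M) :
    Nat.card (G ⧸ M) = p := by
  have : Nontrivial (G ⧸ M) := QuotientGroup.nontrivial_iff.mpr hM.1
  obtain ⟨g, hg⟩ := exists_prime_orderOf_dvd_card' p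
    (((hG.to_quotient M).card_eq_or_dvd).resolve_left Finite.one_lt_card.ne')
  obtain ⟨g, rfl⟩ := QuotientGroup.mk_surjective g
  have hgM : M < (zpowers (g : G ⧸ M)).comap (QuotientGroup.mk' M) := by
    refine SetLike.lt_iff_le_and_exists.mpr ⟨fun m hm ↦ ?_, g, mem_zpowers _, fun hgM ↦ ?_⟩
    · rw [mem_comap, QuotientGroup.mk'_apply, (QuotientGroup.eq_one_iff m).mpr hm]
      exact one_mem _
    · rw [← QuotientGroup.eq_one_iff, ← orderOf_eq_one_iff, hg] at hgM
      exact (Fact.out : p.Prime).one_lt.ne' hgM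
  have htop : zpowers (g : G ⧸ M) = ⊤ := by
    rw [← map_comap_eq_self_of_surjective (QuotientGroup.mk'_surjective M) (zpowers _),
      hM.2 _ hgM, map_top_of_surjective _ (QuotientGroup.mk'_surjective M)]
  rw [← card_top, ← htop, Nat.card_zpowers, hg]

theorem commutator_le_frattini : commutator G ≤ frattini G :=
  le_iInf₂ fun M hM ↦ by
    have := hG.normal_of_isCoatom hM
    have := isCyclic_of_prime_card (hG.card_quotient_of_isCoatom hM)
    exact Normal.quotient_commutative_iff_commutator_le.mp inferInstance

theorem pow_mem_frattini (g : G) : g ^ p ∈ frattini G := by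
  simp only [frattini, Order.radical, mem_iInf]
  intro M hM
  have := hG.normal_of_isCoatom hM
  rw [← QuotientGroup.eq_one_iff, QuotientGroup.mk_pow, ← hG.card_quotient_of_isCoatom hM]
  exact pow_card_eq_one'

theorem index_frattini_dvd_sq {a b : G} (h : closure {a, b} = ⊤) :
    (frattini G).index ∣ p ^ 2 := by
  have : IsMulCommutative (G ⧸ frattini G) :=
    Normal.quotient_commutative_iff_commutator_le.mpr hG.commutator_le_frattini
  have hQ : closure {(a : G ⧸ frattini G), (b : G ⧸ frattini G)} = ⊤ := by
    have := congrArg (Subgroup.map (QuotientGroup.mk' (frattini G))) h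
    rwa [MonoidHom.map_closure, Set.image_pair,
      map_top_of_surjective _ (QuotientGroup.mk'_surjective _)] at this
  have horder (g : G) : orderOf (g : G ⧸ frattini G) ∣ p := orderOf_dvd_of_pow_eq_one <| by
    rw [← QuotientGroup.mk_pow, QuotientGroup.eq_one_iff]
    exact hG.pow_mem_frattini g
  rw [index_eq_card, sq]
  exact (card_dvd_orderOf_mul_orderOf (mul_comm' _ _) hQ).trans
    (mul_dvd_mul (horder a) (horder b))

end IsPGroup

section GeneratingSet

variable {G : Type*} [Group G] {X : Set G} (hX : closure X = ⊤)
  (hXab : ∀ x ∈ X, ∀ S : Subgroup G, x ∈ S → S ≠ ⊤ → IsMulCommutative S)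
  (hnc : ¬IsMulCommutative G)
include hX hXab hnc

theorem exists_closure_pair_eq_top_of_not_isMulCommutative : ∃ a b : G, closure {a, b} = ⊤ := by
  by_contra! hpair
  refine hnc (center_eq_top_iff.mp (eq_top_iff.mpr ?_))
  rw [center_eq_iInf hX]
  refine le_iInf₂ fun a ha ↦ ?_
  rw [← hX, closure_le]
  intro b hb
  have hbS : b ∈ closure {b, a} := subset_closure (Set.mem_insert b {a})
  have haS : a ∈ closure {b, a} := subset_closure (Set.mem_insert_of_mem b rfl)
  have := hXab b hb _ hbS (hpair b a)
  exact mem_centralizer_singleton_iff.mpr (setLike_mul_comm hbS haS)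

theorem frattini_le_center_of_not_isMulCommutative [Finite G] : frattini G ≤ center G := by
  rw [center_eq_iInf hX]
  refine le_iInf₂ fun w hw ↦ ?_
  have hne : zpowers w ⊔ frattini G ≠ ⊤ := fun h ↦ by
    have : IsCyclic G := isCyclic_iff_exists_zpowers_eq_top.mpr ⟨w, frattini_nongenerating h⟩
    exact hnc inferInstance
  have := hXab w hw _ (mem_sup_left (mem_zpowers w)) hne
  exact fun φ hφ ↦ mem_centralizer_singleton_iff.mpr <|
    setLike_mul_comm (mem_sup_right hφ) (mem_sup_left (mem_zpowers w))

end GeneratingSet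

theorem IsPGroup.isMulCommutative_of_ne_top {p : ℕ} [Fact p.Prime] {G : Type*} [Group G]
    [Finite G] (hG : IsPGroup p G) {X : Set G} (hX : closure X = ⊤)
    (hXab : ∀ x ∈ X, ∀ S : Subgroup G, x ∈ S → S ≠ ⊤ → IsMulCommutative S)
    {L : Subgroup G} (hL : L ≠ ⊤) : IsMulCommutative L := by
  by_cases hnc : IsMulCommutative G
  · infer_instance
  obtain ⟨M, hM, hLM⟩ := (eq_top_or_exists_le_coatom L).resolve_left hL
  obtain ⟨a, b, hab⟩ := exists_closure_pair_eq_top_of_not_isMulCommutative hX hXab hnc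
  have := hG.normal_of_isCoatom hM
  have hindex : (frattini G).relIndex M * p = (frattini G).index := by
    rw [← hG.card_quotient_of_isCoatom hM, ← index_eq_card,
      relIndex_mul_index (frattini_le_coatom hM)]
  have hrel : (frattini G).relIndex M ∣ p := by
    have := hG.index_frattini_dvd_sq hab
    rw [← hindex, sq] at this
    exact Nat.dvd_of_mul_dvd_mul_right (Fact.out : p.Prime).pos this
  have := isMulCommutative_of_le_center_of_relIndex_dvd
    (frattini_le_center_of_not_isMulCommutative hX hXab hnc) hrel
  exact .of_setLike_mul_comm fun x hx y hy ↦ setLike_mul_comm (hLM hx) (hLM hy)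

theorem normalClosure_singleton_le_of_isConj {G : Type*} [Group G] {K : Subgroup G} [K.Normal]
    {x y : G} (hxy : IsConj x y) (hy : y ∈ K) : normalClosure {x} ≤ K := by
  obtain ⟨c, rfl⟩ := isConj_iff.mp hxy.symm
  exact normalClosure_le_normal (Set.singleton_subset_iff.mpr (Normal.conj_mem ‹_› y hy c))

theorem isMulCommutative_of_conjugate_mem_of_ne_top {G : Type*} [Group G]
    (hmh : ∀ H : Subgroup G, ¬IsMulCommutative H → H.Normal) {x : G}
    {y : normalClosure {x}} (hy : (y : G) ∈ Group.conjugatesOfSet {x})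
    {S : Subgroup (normalClosure {x})} (hyS : y ∈ S) (hS : S ≠ ⊤) : IsMulCommutative S := by
  have hinj := (normalClosure {x}).subtype_injective
  by_contra hnc
  have hnc' : ¬IsMulCommutative (S.map (normalClosure {x}).subtype) := fun _ ↦
    hnc (comap_map_eq_self_of_injective hinj S ▸ (S.map _).comap_injective_isMulCommutative hinj)
  have := hmh _ hnc'
  obtain ⟨x', hx', hconj⟩ := Group.mem_conjugatesOfSet_iff.mp hy
  rw [Set.mem_singleton_iff.mp hx'] at hconj
  have hNS := normalClosure_singleton_le_of_isConj hconj
    (mem_map_of_mem (normalClosure {x}).subtype hyS)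
  refine hS (eq_top_iff.mpr ?_)
  rw [← subgroupOf_self, ← comap_map_eq_self_of_injective hinj S]
  exact comap_mono hNS

/-- In a finite metahamiltonian p-group, the normal closure of any cyclic
subgroup is abelian or minimal non-abelian. -/
theorem normalClosure_abelian_or_minimal_nonabelian {p : ℕ} (hp : p.Prime)
    (G : Type*) [Group G] [Finite G] (hG : IsPGroup p G)
    (hmh : ∀ H : Subgroup G, ¬IsMulCommutative H → H.Normal) (x : G) :
    IsMulCommutative (Subgroup.normalClosure {x}) ∨
      (¬IsMulCommutative (Subgroup.normalClosure {x}) ∧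
        ∀ L : Subgroup G, L < Subgroup.normalClosure {x} → IsMulCommutative L) := by
  have := Fact.mk hp
  by_cases hN : IsMulCommutative (normalClosure {x})
  · exact .inl hN
  refine .inr ⟨hN, fun L hL ↦ ?_⟩
  have hLN : L.subgroupOf (normalClosure {x}) ≠ ⊤ := fun h ↦
    hL.not_ge (subgroupOf_eq_top.mp h)
  have : IsMulCommutative (L.subgroupOf (normalClosure {x})) :=
    (hG.to_subgroup _).isMulCommutative_of_ne_top
      (closure_preimage_eq_top (Group.conjugatesOfSet {x}))
      (fun _ hy _ hyS hS ↦ isMulCommutative_of_conjugate_mem_of_ne_top hmh hy hyS hS) hLN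
  rw [← map_subgroupOf_eq_of_le hL.le]
  infer_instance
end

section
/- If G is a finite group in which [x,y,y] = 1 for all x, y ∈ G (the 2-Engel condition), then G is nilpotent of class at most 3; moreover, if G has no element of order 3, then G has nilpotency class at most 2. -/
/-!
In a 2-Engel group every element commutes with its conjugates, so the normal closure `A` of any
`x` is abelian. Conjugation `ρ` makes `A` a `G`-module on which `δ g := 1 - ρ g` acts by
`a ↦ ⁅a, g⁆`, so the Engel condition reads `δ g ^ 2 = 0`. Since `δ (g k) = δ g + δ k - δ g δ k`,
a little ring theory shows that the `δ g` anticommute and that `2 δ g δ k δ l = 0`. Evaluated at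
`x`, this gives `⁅⁅x, y⁆, z⁆ = ⁅⁅x, z⁆, y⁆⁻¹` and shows that four-fold commutators have order
dividing 2. By the first identity `⁅⁅x, y⁆, z⁆` is invariant under cyclic permutations of
`x, y, z`, and the Hall–Witt identity then gives it order dividing 3. Hence four-fold commutators
also have order dividing 3, so they vanish.
-/

open scoped commutatorElement

section

variable {R : Type*} [Ring R]

theorem mul_add_mul_swap_eq_zero_of_sq_eq_zero {a b : R} (ha : a ^ 2 = 0) (hb : b ^ 2 = 0)
    (hab : (a + b - a * b) ^ 2 = 0) : a * b + b * a = 0 := by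
  -- `(1 + a) (a + b - a b)² (1 + b) ≡ a b + b a` modulo the ideal generated by `a²` and `b²`
  linear_combination (norm := noncomm_ring) (1 + a) * hab * (1 + b)
    + ha * (b * a + b ^ 2 + a * b ^ 2 + b ^ 3 - b * a * b ^ 2 - 1 - a - b)
    + (b * a - a - 1) * hb - hb * b

variable {M : Type*} [Monoid M]

theorem MonoidHom.one_sub_map_mul (ρ : M →* R) (g k : M) :
    1 - ρ (g * k) = (1 - ρ g) + (1 - ρ k) - (1 - ρ g) * (1 - ρ k) := by
  rw [map_mul]
  noncomm_ring

variable {ρ : M →* R} (hρ : ∀ g, (1 - ρ g) ^ 2 = 0)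
include hρ

theorem MonoidHom.one_sub_map_mul_add_swap_eq_zero (g k : M) :
    (1 - ρ g) * (1 - ρ k) + (1 - ρ k) * (1 - ρ g) = 0 :=
  mul_add_mul_swap_eq_zero_of_sq_eq_zero (hρ g) (hρ k) (ρ.one_sub_map_mul g k ▸ hρ (g * k))

theorem MonoidHom.two_mul_one_sub_map_mul_mul_eq_zero (g k l : M) :
    2 * ((1 - ρ g) * (1 - ρ k) * (1 - ρ l)) = 0 := by
  have hk := one_sub_map_mul_add_swap_eq_zero hρ g k
  have hl := one_sub_map_mul_add_swap_eq_zero hρ g l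
  have hkl := one_sub_map_mul_add_swap_eq_zero hρ g (k * l)
  rw [ρ.one_sub_map_mul] at hkl
  linear_combination (norm := noncomm_ring) hk + hl - hkl - (1 - ρ k) * hl + hk * (1 - ρ l)

end

theorem AddMonoid.End.add_apply {M : Type*} [AddCommMonoid M] (f g : AddMonoid.End M) (m : M) :
    (f + g) m = f m + g m :=
  rfl

namespace Subgroup

variable {G : Type*} [Group G] (A : Subgroup G) [A.Normal]

def conjRepresentation : G →* AddMonoid.End (Additive A) :=
  (monoidEndToAdditive A).toMonoidHom.comp
    ((MulDistribMulAction.toMonoidEnd (ConjAct G) A).comp ConjAct.toConjAct.toMonoidHom)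

open scoped IsMulCommutative

variable [IsMulCommutative A]

theorem one_sub_conjRepresentation_apply (g : G) (b : Additive A) :
    (((1 - A.conjRepresentation g) b).toMul : G) = ⁅(b.toMul : G), g⁆ := by
  change ((b - A.conjRepresentation g b).toMul : G) = _
  rw [toMul_sub, coe_div, div_eq_mul_inv, commutatorElement_def]
  change _ * (g * _ * g⁻¹)⁻¹ = _
  group

variable {A} (hA : ∀ a ∈ A, ∀ g : G, ⁅⁅a, g⁆, g⁆ = 1)
include hA

theorem sq_one_sub_conjRepresentation (g : G) : (1 - A.conjRepresentation g) ^ 2 = 0 := by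
  ext b
  simpa [sq, one_sub_conjRepresentation_apply] using hA _ b.toMul.2 g

theorem commutatorElement_commutatorElement_swap_of_mem {a : G} (ha : a ∈ A) (g k : G) :
    ⁅⁅a, g⁆, k⁆ = ⁅⁅a, k⁆, g⁆⁻¹ := by
  have := congr((($(MonoidHom.one_sub_map_mul_add_swap_eq_zero
    (sq_one_sub_conjRepresentation hA) k g) (.ofMul ⟨a, ha⟩)).toMul : G))
  simp only [AddMonoid.End.add_apply, AddMonoid.End.coe_mul, Function.comp_apply, toMul_add,
    coe_mul, one_sub_conjRepresentation_apply, AddMonoid.End.zero_apply, toMul_zero, coe_one]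
    at this
  exact eq_inv_of_mul_eq_one_left this

theorem commutatorElement_commutatorElement_commutatorElement_sq_of_mem {a : G} (ha : a ∈ A)
    (g k l : G) : ⁅⁅⁅a, g⁆, k⁆, l⁆ ^ 2 = 1 := by
  have := congr((($(MonoidHom.two_mul_one_sub_map_mul_mul_eq_zero
    (sq_one_sub_conjRepresentation hA) l k g) (.ofMul ⟨a, ha⟩)).toMul : G))
  simpa only [AddMonoid.End.ofNat_apply, AddMonoid.End.coe_mul, Function.comp_apply, toMul_nsmul,
    SubmonoidClass.coe_pow, one_sub_conjRepresentation_apply, toMul_ofMul, AddMonoid.End.zero_apply,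
    toMul_zero, coe_one] using this

end Subgroup

def IsTwoEngel (G : Type*) [Group G] : Prop :=
  ∀ x y : G, ⁅⁅x, y⁆, y⁆ = 1

namespace IsTwoEngel

variable {G : Type*} [Group G] (h : IsTwoEngel G)
include h

theorem commute_commutatorElement (x y : G) : Commute ⁅x, y⁆ y :=
  commutatorElement_eq_one_iff_commute.mp (h x y)

theorem commute_commutatorElement_left (x y : G) : Commute x ⁅x, y⁆ := by
  simpa using (h.commute_commutatorElement y x).inv_left.symm

theorem commutatorElement_inv_left (x y : G) : ⁅x⁻¹, y⁆ = ⁅x, y⁆⁻¹ := by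
  rw [_root_.commutatorElement_inv_left, ← (h.commute_commutatorElement y x).inv_right.eq,
    inv_mul_cancel_right, commutatorElement_inv]

theorem commutatorElement_pow_left (x y : G) (n : ℕ) : ⁅x ^ n, y⁆ = ⁅x, y⁆ ^ n := by
  induction n with
  | zero => simp
  | succ n ih =>
    rw [pow_succ', commutatorElement_mul_left_eq_conj_mul, ih,
      ((h.commute_commutatorElement_left x y).pow_right n).mul_inv_cancel, pow_succ]

theorem commute_conj (x g : G) : Commute x (g * x * g⁻¹) := by
  rw [show g * x * g⁻¹ = ⁅g, x⁆ * x by group]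
  exact (h.commute_commutatorElement g x).symm.mul_right (Commute.refl x)

theorem isMulCommutative_normalClosure (x : G) :
    IsMulCommutative (Subgroup.normalClosure {x}) := by
  refine Subgroup.isMulCommutative_closure fun p hp q hq => ?_
  simp only [Group.mem_conjugatesOfSet_iff, Set.mem_singleton_iff, exists_eq_left, isConj_iff]
    at hp hq
  obtain ⟨g, rfl⟩ := hp
  obtain ⟨k, rfl⟩ := hq
  simpa [mul_assoc] using ((h.commute_conj x (k⁻¹ * g)).map (MulAut.conj k)).symm.eq

theorem commutatorElement_commutatorElement_swap (x y z : G) : ⁅⁅x, y⁆, z⁆ = ⁅⁅x, z⁆, y⁆⁻¹ :=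
  have := h.isMulCommutative_normalClosure x
  Subgroup.commutatorElement_commutatorElement_swap_of_mem (fun a _ g => h a g)
    (Subgroup.subset_normalClosure (Set.mem_singleton x)) y z

theorem commutatorElement_commutatorElement_rotate (x y z : G) : ⁅⁅y, z⁆, x⁆ = ⁅⁅x, y⁆, z⁆ := by
  rw [h.commutatorElement_commutatorElement_swap, ← commutatorElement_inv x y,
    h.commutatorElement_inv_left, inv_inv]

theorem commute_commutatorElement_commutatorElement (x y z : G) : Commute ⁅⁅x, y⁆, z⁆ x := by
  have := h.isMulCommutative_normalClosure x
  have hmem : ∀ a ∈ Subgroup.normalClosure {x}, ∀ g : G, ⁅a, g⁆ ∈ Subgroup.normalClosure {x} :=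
    fun a ha g => Subgroup.commutator_le_left _ ⊤ (Subgroup.commutator_mem_commutator ha trivial)
  have hx : x ∈ Subgroup.normalClosure {x} := Subgroup.subset_normalClosure (Set.mem_singleton x)
  exact setLike_mul_comm (hmem _ (hmem x hx y) z) hx

theorem commutatorElement_commutatorElement_pow_three (x y z : G) : ⁅⁅x, y⁆, z⁆ ^ 3 = 1 := by
  have hconj (a b c : G) : a * ⁅⁅a⁻¹, b⁆, c⁆ * a⁻¹ = ⁅⁅a, b⁆, c⁆⁻¹ := by
    rw [h.commutatorElement_inv_left, h.commutatorElement_inv_left,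
      (h.commute_commutatorElement_commutatorElement a b c).inv_left.symm.mul_inv_cancel]
  have hallWitt := conj_commutatorElement_left_commutatorElement_mul x y z
  rw [show ∀ p q r : G, x * p * x⁻¹ * z * q * z⁻¹ * y * r * y⁻¹ =
      (x * p * x⁻¹) * (z * q * z⁻¹) * (y * r * y⁻¹) by intros; group, hconj, hconj, hconj,
    h.commutatorElement_commutatorElement_rotate y z x,
    h.commutatorElement_commutatorElement_rotate x y z] at hallWitt
  rw [← inv_eq_one, ← inv_pow, pow_three, ← mul_assoc]
  exact hallWitt

theorem commutatorElement_commutatorElement_commutatorElement_eq_one (x y z w : G) :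
    ⁅⁅⁅x, y⁆, z⁆, w⁆ = 1 := by
  have := h.isMulCommutative_normalClosure x
  have hsq : ⁅⁅⁅x, y⁆, z⁆, w⁆ ^ 2 = 1 :=
    Subgroup.commutatorElement_commutatorElement_commutatorElement_sq_of_mem
      (fun a _ g => h a g) (Subgroup.subset_normalClosure (Set.mem_singleton x)) y z w
  have hcube : ⁅⁅⁅x, y⁆, z⁆, w⁆ ^ 3 = 1 := by
    rw [← h.commutatorElement_pow_left, h.commutatorElement_commutatorElement_pow_three,
      commutatorElement_one_left]
  simpa using pow_gcd_eq_one.mpr ⟨hsq, hcube⟩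

end IsTwoEngel

theorem Subgroup.top_lowerCentralSeries_two_eq_bot {G : Type*} [Group G]
    (h : ∀ x y z : G, ⁅⁅x, y⁆, z⁆ = 1) : (⊤ : Subgroup G).lowerCentralSeries 2 = ⊥ := by
  rw [Subgroup.lowerCentralSeries_eq_bot_iff_upperCentralSeries_eq_top, eq_top_iff]
  intro x _
  simp only [Subgroup.mem_upperCentralSeries_succ_iff, Subgroup.upperCentralSeries_zero,
    Subgroup.mem_bot, h, implies_true]

theorem Subgroup.top_lowerCentralSeries_three_eq_bot {G : Type*} [Group G]
    (h : ∀ x y z w : G, ⁅⁅⁅x, y⁆, z⁆, w⁆ = 1) : (⊤ : Subgroup G).lowerCentralSeries 3 = ⊥ := by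
  rw [Subgroup.lowerCentralSeries_eq_bot_iff_upperCentralSeries_eq_top, eq_top_iff]
  intro x _
  simp only [Subgroup.mem_upperCentralSeries_succ_iff, Subgroup.upperCentralSeries_zero,
    Subgroup.mem_bot, h, implies_true]

theorem two_engel_class_le_three_general (G : Type*) [Group G]
    (h : ∀ x y : G, ⁅⁅x, y⁆, y⁆ = 1) :
    (⊤ : Subgroup G).lowerCentralSeries 3 = ⊥ ∧
      ((∀ g : G, orderOf g ≠ 3) → (⊤ : Subgroup G).lowerCentralSeries 2 = ⊥) := by
  have h : IsTwoEngel G := h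
  refine ⟨Subgroup.top_lowerCentralSeries_three_eq_bot
    h.commutatorElement_commutatorElement_commutatorElement_eq_one,
    fun hG => Subgroup.top_lowerCentralSeries_two_eq_bot fun x y z => ?_⟩
  by_contra hne
  exact hG _ (orderOf_eq_prime (h.commutatorElement_commutatorElement_pow_three x y z) hne)

/-- A finite 2-Engel group is nilpotent of class at most 3; if moreover it has
no element of order 3, its class is at most 2. -/
theorem two_engel_class_le_three (G : Type*) [Group G] [Finite G]
    (h : ∀ x y : G, ⁅⁅x, y⁆, y⁆ = 1) :
    (⊤ : Subgroup G).lowerCentralSeries 3 = ⊥ ∧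
      ((∀ g : G, orderOf g ≠ 3) → (⊤ : Subgroup G).lowerCentralSeries 2 = ⊥) :=
  two_engel_class_le_three_general G h
end

section
/- Let G be a finite p-group. Then G is metacyclic if and only if G/(Φ(G')G₃) is metacyclic, where G₃ = [G',G] is the third term of the lower central series and Φ(G') is the Frattini subgroup of the derived subgroup. -/
/-!
Metacyclicity passes to quotients, which gives one direction. For the other, induct on `|G|`.
If `N = Φ(G')G₃` is nontrivial, it contains a central element `z` of order `p`. Since `N` maps
into the corresponding subgroup of `G/⟨z⟩`, induction makes `G/⟨z⟩` metacyclic, so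
`G = ⟨z, c⟩⟨g⟩` with `C = ⟨z, c⟩` normal. If `z ∈ ⟨c⟩`, then `C = ⟨c⟩` is cyclic and we are
done. In any case `C` is abelian and `x ↦ [x, g]` is a homomorphism on `C` killing `z`, so
`G' = ⟨d⟩` with `d = [c, g]`, and `[d, g] = d ^ i`. Nilpotency forces `p ∣ i`, hence
`G₃ ≤ ⟨d ^ p⟩`; also `Φ(⟨d⟩) = ⟨d ^ p⟩`, and `d ^ p ∈ ⟨c⟩` because `z ^ p = 1`. So
`z ∈ N ≤ ⟨c⟩`, which rules out the case `z ∉ ⟨c⟩`.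
-/

open scoped commutatorElement

section Metacyclic

def IsMetacyclic (G : Type*) [Group G] : Prop :=
  ∃ (C : Subgroup G) (_ : C.Normal), IsCyclic C ∧ IsCyclic (G ⧸ C)

variable {G H : Type*} [Group G] [Group H]

theorem IsMetacyclic.of_surjective {f : G →* H} (hf : Function.Surjective f)
    (h : IsMetacyclic G) : IsMetacyclic H := by
  obtain ⟨C, hC, hCcyc, hQcyc⟩ := h
  have := hC.map f hf
  exact ⟨C.map f, this, isCyclic_of_surjective _ (f.subgroupMap_surjective C),
    isCyclic_of_surjective _ (QuotientGroup.map_surjective_of_surjective C _ f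
      (QuotientGroup.mk_surjective.comp hf) (Subgroup.le_comap_map f C))⟩

theorem isCyclic_quotient_iff_exists_sup_zpowers_eq_top {N : Subgroup G} [N.Normal] :
    IsCyclic (G ⧸ N) ↔ ∃ g : G, N ⊔ Subgroup.zpowers g = ⊤ := by
  rw [isCyclic_iff_exists_zpowers_eq_top]
  refine ⟨fun ⟨γ, hγ⟩ => ?_, fun ⟨g, hg⟩ => ⟨QuotientGroup.mk' N g, ?_⟩⟩
  · obtain ⟨g, rfl⟩ := QuotientGroup.mk'_surjective N γ
    refine ⟨g, ?_⟩
    rw [← QuotientGroup.comap_map_mk', MonoidHom.map_zpowers, hγ, Subgroup.comap_top]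
  · apply Subgroup.comap_injective (QuotientGroup.mk'_surjective N)
    rw [← MonoidHom.map_zpowers, QuotientGroup.comap_map_mk', hg, Subgroup.comap_top]

theorem isMetacyclic_iff_exists_zpowers :
    IsMetacyclic G ↔ ∃ c g : G, (Subgroup.zpowers c).Normal ∧
      Subgroup.zpowers c ⊔ Subgroup.zpowers g = ⊤ := by
  constructor
  · rintro ⟨C, hC, hCcyc, hQcyc⟩
    obtain ⟨c, rfl⟩ := (C.isCyclic_iff_exists_zpowers_eq_top).1 hCcyc
    obtain ⟨g, hg⟩ := isCyclic_quotient_iff_exists_sup_zpowers_eq_top.1 hQcyc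
    exact ⟨c, g, hC, hg⟩
  · rintro ⟨c, g, hc, hg⟩
    exact ⟨_, hc, inferInstance, isCyclic_quotient_iff_exists_sup_zpowers_eq_top.2 ⟨g, hg⟩⟩

theorem IsMetacyclic.exists_of_quotient {M : Subgroup G} [M.Normal]
    (h : IsMetacyclic (G ⧸ M)) : ∃ c g : G, (M ⊔ Subgroup.zpowers c).Normal ∧
      M ⊔ Subgroup.zpowers c ⊔ Subgroup.zpowers g = ⊤ := by
  obtain ⟨c', g', hc', hg'⟩ := isMetacyclic_iff_exists_zpowers.1 h
  obtain ⟨c, rfl⟩ := QuotientGroup.mk'_surjective M c'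
  obtain ⟨g, rfl⟩ := QuotientGroup.mk'_surjective M g'
  refine ⟨c, g, ?_, ?_⟩
  · rw [← QuotientGroup.comap_map_mk', MonoidHom.map_zpowers]
    exact hc'.comap _
  · rw [sup_assoc, ← QuotientGroup.comap_map_mk', Subgroup.map_sup, MonoidHom.map_zpowers,
      MonoidHom.map_zpowers, hg', Subgroup.comap_top]

end Metacyclic

/-- `Φ(G') G₃`; the lower central series is indexed from `0`, so `G₃` is its term `2`. -/
def blackburnSubgroup (G : Type*) [Group G] : Subgroup G :=
  (frattini (commutator G)).map (commutator G).subtype ⊔ (⊤ : Subgroup G).lowerCentralSeries 2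

instance (G : Type*) [Group G] : (blackburnSubgroup G).Normal :=
  Subgroup.sup_normal _ _

section Surjective

variable {G H : Type*} [Group G] [Group H] {f : G →* H}

theorem map_commutator_of_surjective (hf : Function.Surjective f) :
    (commutator G).map f = commutator H := by
  rw [commutator_def, commutator_def, Subgroup.map_commutator,
    Subgroup.map_top_of_surjective f hf]

theorem map_frattini_le_of_surjective (hf : Function.Surjective f) :
    (frattini G).map f ≤ frattini H :=
  Subgroup.map_le_iff_le_comap.2 (frattini_le_comap_frattini_of_surjective hf)

theorem map_blackburnSubgroup_le (hf : Function.Surjective f) :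
    (blackburnSubgroup G).map f ≤ blackburnSubgroup H := by
  let f' : commutator G →* commutator H :=
    (f.comp (commutator G).subtype).codRestrict _ fun x =>
      map_commutator_of_surjective hf ▸ Subgroup.mem_map_of_mem f x.2
  have hf' : Function.Surjective f' := by
    rintro ⟨y, hy⟩
    rw [← map_commutator_of_surjective hf] at hy
    obtain ⟨x, hx, rfl⟩ := hy
    exact ⟨⟨x, hx⟩, rfl⟩
  have hcomp : f.comp (commutator G).subtype = (commutator H).subtype.comp f' := rfl
  rw [blackburnSubgroup, blackburnSubgroup, Subgroup.map_sup, Subgroup.map_map, hcomp,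
    ← Subgroup.map_map, Subgroup.map_lowerCentralSeries, Subgroup.map_top_of_surjective f hf]
  exact sup_le_sup_right (Subgroup.map_mono (map_frattini_le_of_surjective hf')) _

theorem IsMetacyclic.quotient_blackburnSubgroup_of_surjective (hf : Function.Surjective f)
    (h : IsMetacyclic (G ⧸ blackburnSubgroup G)) : IsMetacyclic (H ⧸ blackburnSubgroup H) :=
  h.of_surjective (QuotientGroup.map_surjective_of_surjective _ _ _
    (QuotientGroup.mk_surjective.comp hf)
    (Subgroup.map_le_iff_le_comap.1 (map_blackburnSubgroup_le hf)))

end Surjective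

section Commutators

variable {G : Type*} [Group G]

theorem commutatorElement_mem_iff_commute {K : Subgroup G} [K.Normal] {x y : G} :
    ⁅x, y⁆ ∈ K ↔ Commute (x : G ⧸ K) (y : G ⧸ K) := by
  rw [← QuotientGroup.eq_one_iff, ← commutatorElement_eq_one_iff_commute]
  exact Iff.of_eq (congrArg (· = 1) (map_commutatorElement (QuotientGroup.mk' K) x y))

theorem commutatorElement_mem_of_sup_zpowers_eq_top {A K : Subgroup G} [K.Normal] {g x : G}
    (hAg : A ⊔ Subgroup.zpowers g = ⊤) (hA : ∀ a ∈ A, ⁅x, a⁆ ∈ K) (hg : ⁅x, g⁆ ∈ K)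
    (y : G) : ⁅x, y⁆ ∈ K := by
  have hle : A ⊔ Subgroup.zpowers g ≤
      (Subgroup.centralizer {(x : G ⧸ K)}).comap (QuotientGroup.mk' K) := by
    refine sup_le (fun a ha => ?_) (Subgroup.zpowers_le.2 ?_) <;>
      simp only [Subgroup.mem_comap, Subgroup.mem_centralizer_singleton_iff,
        QuotientGroup.mk'_apply]
    · exact (commutatorElement_mem_iff_commute.1 (hA a ha)).symm.eq
    · exact (commutatorElement_mem_iff_commute.1 hg).symm.eq
  have hy := hle (hAg ▸ Subgroup.mem_top y)
  simp only [Subgroup.mem_comap, Subgroup.mem_centralizer_singleton_iff,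
    QuotientGroup.mk'_apply] at hy
  exact commutatorElement_mem_iff_commute.2 (Commute.symm hy)

theorem commutator_le_of_sup_zpowers_eq_top {A K : Subgroup G} [K.Normal] {g : G}
    (hAg : A ⊔ Subgroup.zpowers g = ⊤) (hA : ∀ a ∈ A, ∀ b ∈ A, ⁅a, b⁆ ∈ K)
    (hg : ∀ a ∈ A, ⁅a, g⁆ ∈ K) : commutator G ≤ K := by
  have swap {x y : G} (h : ⁅x, y⁆ ∈ K) : ⁅y, x⁆ ∈ K := commutatorElement_inv x y ▸ K.inv_mem h
  have hA' (a : G) (ha : a ∈ A) (y : G) : ⁅a, y⁆ ∈ K :=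
    commutatorElement_mem_of_sup_zpowers_eq_top hAg (hA a ha) (hg a ha) y
  have hg' (y : G) : ⁅g, y⁆ ∈ K :=
    commutatorElement_mem_of_sup_zpowers_eq_top hAg (fun a ha => swap (hg a ha))
      (commutatorElement_self g ▸ K.one_mem) y
  rw [commutator_def, Subgroup.commutator_le]
  exact fun x _ y _ => swap (commutatorElement_mem_of_sup_zpowers_eq_top hAg
    (fun a ha => swap (hA' a ha y)) (swap (hg' y)) x)

theorem commutator_zpowers_le {K : Subgroup G} [K.Normal] {d : G} (h : ∀ y, ⁅d, y⁆ ∈ K) :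
    ⁅Subgroup.zpowers d, ⊤⁆ ≤ K := by
  rw [Subgroup.commutator_le]
  rintro _ ⟨m, rfl⟩ y -
  rw [commutatorElement_mem_iff_commute, QuotientGroup.mk_zpow]
  exact (commutatorElement_mem_iff_commute.1 (h y)).zpow_left m

theorem commutatorElement_zpow_left {x g : G} (h : Commute x (g * x * g⁻¹)) (n : ℤ) :
    ⁅x ^ n, g⁆ = ⁅x, g⁆ ^ n := by
  have h' : Commute x (g * x⁻¹ * g⁻¹) := by simpa only [conj_inv] using h.inv_right
  rw [commutatorElement_def, commutatorElement_def, mul_assoc x g, mul_assoc x, h'.mul_zpow,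
    conj_zpow]
  group

end Commutators

section Zpowers

variable {G : Type*} [Group G]

theorem mem_normalizer_zpowers [Finite G] {d y : G} (h : y * d * y⁻¹ ∈ Subgroup.zpowers d) :
    y ∈ Subgroup.normalizer (Subgroup.zpowers d : Set G) :=
  Subgroup.mem_normalizer_fintype fun _ ⟨m, hm⟩ => by
    simp only [← hm, ← conj_zpow]
    exact Subgroup.zpow_mem _ h m

theorem zpowers_normal_of_conj_mem [Finite G] {A : Subgroup G} {g d : G}
    (hAg : A ⊔ Subgroup.zpowers g = ⊤) (hA : ∀ a ∈ A, a * d * a⁻¹ ∈ Subgroup.zpowers d)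
    (hg : g * d * g⁻¹ ∈ Subgroup.zpowers d) : (Subgroup.zpowers d).Normal := by
  rw [← Subgroup.normalizer_eq_top_iff, eq_top_iff, ← hAg]
  exact sup_le (fun a ha => mem_normalizer_zpowers (hA a ha))
    (Subgroup.zpowers_le.2 (mem_normalizer_zpowers hg))

theorem zpowers_pow_normal {d : G} [hd : (Subgroup.zpowers d).Normal] (k : ℕ) :
    (Subgroup.zpowers (d ^ k)).Normal := by
  refine ⟨fun _ ⟨m, hm⟩ y => ?_⟩
  obtain ⟨n, hn⟩ := hd.conj_mem d (Subgroup.mem_zpowers d) y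
  refine ⟨n * m, ?_⟩
  simp only [← hm, ← conj_zpow, ← conj_pow, ← hn]
  rw [← zpow_natCast, ← zpow_natCast, ← zpow_mul, ← zpow_mul, ← zpow_mul, mul_left_comm]

end Zpowers

section Frattini

variable {G : Type*} [Group G]

theorem Subgroup.isCoatom_of_index_prime {H : Subgroup G} (h : H.index.Prime) : IsCoatom H := by
  refine ⟨fun hH => Nat.not_prime_one (by simpa [hH] using h), fun K hK => ?_⟩
  rcases (Nat.dvd_prime h).1 (Subgroup.index_dvd_of_le hK.le) with h1 | hKH
  · exact Subgroup.index_eq_one.1 h1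
  · have := Subgroup.relIndex_mul_index hK.le
    rw [hKH, Nat.mul_eq_right h.ne_zero, Subgroup.relIndex_eq_one] at this
    exact absurd this hK.not_ge

variable {p : ℕ} [hp : Fact p.Prime]

theorem IsPGroup.frattini_le_zpowers_pow (hG : IsPGroup p G) {x : G}
    (hx : Subgroup.zpowers x = ⊤) : frattini G ≤ Subgroup.zpowers (x ^ p) := by
  obtain ⟨e, he⟩ := IsPGroup.iff_orderOf.1 hG x
  rcases e with _ | e
  · rw [pow_zero, orderOf_eq_one_iff] at he
    subst he
    simp only [one_pow, hx, le_top]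
  have hxG : orderOf x = Nat.card G := by rw [← Nat.card_zpowers, hx, Subgroup.card_top]
  have hcard := Subgroup.index_mul_card (Subgroup.zpowers (x ^ p))
  rw [Nat.card_zpowers, orderOf_pow_of_dvd hp.out.ne_zero (he ▸ dvd_pow_self p e.succ_ne_zero),
    ← hxG, he, pow_succ, Nat.mul_div_cancel _ hp.out.pos, mul_comm (p ^ e)] at hcard
  apply frattini_le_coatom
  apply Subgroup.isCoatom_of_index_prime
  rw [Nat.eq_of_mul_eq_mul_right (pow_pos hp.out.pos e) hcard]
  exact hp.out

theorem IsPGroup.map_frattini_le_zpowers_pow (hG : IsPGroup p G) {H : Subgroup G} {d : G}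
    (hH : H = Subgroup.zpowers d) : (frattini H).map H.subtype ≤ Subgroup.zpowers (d ^ p) := by
  subst hH
  have hx : Subgroup.zpowers (⟨d, Subgroup.mem_zpowers d⟩ : Subgroup.zpowers d) = ⊤ :=
    eq_top_iff.2 fun ⟨_, m, hm⟩ _ => ⟨m, Subtype.ext hm⟩
  calc (frattini _).map (Subgroup.zpowers d).subtype
      ≤ (Subgroup.zpowers _).map (Subgroup.zpowers d).subtype :=
        Subgroup.map_mono ((hG.to_subgroup _).frattini_le_zpowers_pow hx)
    _ = Subgroup.zpowers (d ^ p) := by rw [MonoidHom.map_zpowers]; rfl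

end Frattini

section PGroup

variable {p : ℕ} [hp : Fact p.Prime] {G : Type*} [Group G] [Finite G]

theorem IsPGroup.commutatorElement_mem_zpowers_pow (hG : IsPGroup p G) {d g : G} {i : ℤ}
    (h : ⁅d, g⁆ = d ^ i) : ⁅d, g⁆ ∈ Subgroup.zpowers (d ^ p) := by
  have hconj : Commute d (g * d * g⁻¹) := by
    have : g * d * g⁻¹ = (d ^ i)⁻¹ * d := by rw [← h, commutatorElement_def]; group
    rw [this]
    exact ((Commute.refl d).zpow_right i).inv_right.mul_right (Commute.refl d)
  have hlcs (k : ℕ) : d ^ (i ^ k) ∈ (⊤ : Subgroup G).lowerCentralSeries k := by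
    induction k with
    | zero => exact Subgroup.mem_top _
    | succ k ih =>
      have : d ^ (i ^ (k + 1)) = ⁅d ^ (i ^ k), g⁆ := by
        rw [commutatorElement_zpow_left hconj, h, ← zpow_mul, pow_succ']
      rw [this]
      exact Subgroup.commutator_mem_commutator ih (Subgroup.mem_top g)
  obtain ⟨K, hK⟩ := Subgroup.nilpotent_iff_lowerCentralSeries.1 hG.isNilpotent
  have hdK : d ^ (i ^ K) = 1 := by simpa [hK] using hlcs K
  obtain ⟨e, he⟩ := IsPGroup.iff_orderOf.1 hG d
  rcases e with _ | e
  · rw [pow_zero, orderOf_eq_one_iff] at he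
    simp [he]
  have hpi : (p : ℤ) ∣ i := by
    refine (Nat.prime_iff_prime_int.1 hp.out).dvd_of_dvd_pow (n := K) ?_
    refine dvd_trans ?_ (orderOf_dvd_iff_zpow_eq_one.2 hdK)
    rw [he]
    exact_mod_cast dvd_pow_self p e.succ_ne_zero
  obtain ⟨j, rfl⟩ := hpi
  exact ⟨j, by rw [h, zpow_mul, zpow_natCast]⟩

theorem IsPGroup.inf_center_ne_bot (hG : IsPGroup p G) {N : Subgroup G} [N.Normal]
    (hN : N ≠ ⊥) : N ⊓ Subgroup.center G ≠ ⊥ := by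
  have hpN : p ∣ Nat.card N :=
    (hG.to_subgroup N).card_eq_or_dvd.resolve_left (mt Subgroup.card_eq_one.1 hN)
  obtain ⟨b, hb, hb1⟩ := (hG.of_equiv ConjAct.toConjAct)
    |>.exists_fixed_point_of_prime_dvd_card_of_fixed_point N hpN (a := 1) fun g => smul_one g
  refine Subgroup.ne_bot_iff_exists_ne_one.2
    ⟨⟨b, b.2, Subgroup.mem_center_iff.2 fun g => ?_⟩, ?_⟩
  · have := congrArg Subtype.val (hb (ConjAct.toConjAct g))
    rwa [ConjAct.Subgroup.val_conj_smul, ConjAct.toConjAct_smul, mul_inv_eq_iff_eq_mul] at this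
  · exact fun h => hb1 (Subtype.ext (congrArg Subtype.val h).symm)

theorem IsPGroup.exists_mem_inf_center_orderOf_eq (hG : IsPGroup p G) {N : Subgroup G}
    [N.Normal] (hN : N ≠ ⊥) : ∃ z ∈ N ⊓ Subgroup.center G, orderOf z = p := by
  have hpN : p ∣ Nat.card (N ⊓ Subgroup.center G : Subgroup G) :=
    (hG.to_subgroup _).card_eq_or_dvd.resolve_left
      (mt Subgroup.card_eq_one.1 (hG.inf_center_ne_bot hN))
  obtain ⟨x, hx⟩ := exists_prime_orderOf_dvd_card' p hpN
  exact ⟨x, x.2, by rwa [Subgroup.orderOf_coe]⟩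

end PGroup

section CentralExtension

variable {G : Type*} [Group G] {z c g x : G}

theorem zpowers_normal_of_mem_center (hz : z ∈ Subgroup.center G) :
    (Subgroup.zpowers z).Normal :=
  ⟨fun x hx y => by
    rwa [Subgroup.mem_center_iff.1 (Subgroup.zpowers_le.2 hz hx) y, mul_inv_cancel_right]⟩

theorem commute_zpow_of_mem_center (hz : z ∈ Subgroup.center G) (b : ℤ) (y : G) :
    Commute (z ^ b) y :=
  (Subgroup.mem_center_iff.1 (Subgroup.zpow_mem _ hz b) y).symm

theorem exists_eq_zpow_mul_zpow_of_mem_sup (hz : z ∈ Subgroup.center G)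
    (hx : x ∈ Subgroup.zpowers z ⊔ Subgroup.zpowers c) : ∃ b a : ℤ, x = z ^ b * c ^ a := by
  have := zpowers_normal_of_mem_center hz
  obtain ⟨_, ⟨b, rfl⟩, _, ⟨a, rfl⟩, rfl⟩ := Subgroup.mem_sup_of_normal_left.1 hx
  exact ⟨b, a, rfl⟩

theorem commute_of_mem_sup_zpowers (hz : z ∈ Subgroup.center G) {y : G}
    (hx : x ∈ Subgroup.zpowers z ⊔ Subgroup.zpowers c)
    (hy : y ∈ Subgroup.zpowers z ⊔ Subgroup.zpowers c) : Commute x y := by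
  obtain ⟨b, a, rfl⟩ := exists_eq_zpow_mul_zpow_of_mem_sup hz hx
  obtain ⟨b', a', rfl⟩ := exists_eq_zpow_mul_zpow_of_mem_sup hz hy
  exact (commute_zpow_of_mem_center hz b _).mul_left
    ((commute_zpow_of_mem_center hz b' _).symm.mul_right ((Commute.refl c).zpow_zpow a a'))

theorem exists_commutatorElement_eq_zpow_of_mem_sup (hz : z ∈ Subgroup.center G)
    (hc : Commute c (g * c * g⁻¹)) (hx : x ∈ Subgroup.zpowers z ⊔ Subgroup.zpowers c) :
    ∃ a : ℤ, ⁅x, g⁆ = ⁅c, g⁆ ^ a := by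
  obtain ⟨b, a, rfl⟩ := exists_eq_zpow_mul_zpow_of_mem_sup hz hx
  refine ⟨a, ?_⟩
  have : ⁅z ^ b * c ^ a, g⁆ = z ^ b * ⁅c ^ a, g⁆ * (z ^ b)⁻¹ * ⁅z ^ b, g⁆ := by
    simp only [commutatorElement_def]; group
  rw [this, commutatorElement_eq_one_iff_commute.2 (commute_zpow_of_mem_center hz b g), mul_one,
    (commute_zpow_of_mem_center hz b _).eq, mul_inv_cancel_right, commutatorElement_zpow_left hc]

theorem pow_mem_zpowers_of_mem_sup {p : ℕ} (hz : z ∈ Subgroup.center G) (hzp : z ^ p = 1)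
    (hx : x ∈ Subgroup.zpowers z ⊔ Subgroup.zpowers c) : x ^ p ∈ Subgroup.zpowers c := by
  obtain ⟨b, a, rfl⟩ := exists_eq_zpow_mul_zpow_of_mem_sup hz hx
  rw [(commute_zpow_of_mem_center hz b _).mul_pow, ← zpow_natCast, ← zpow_mul, mul_comm,
    zpow_mul, zpow_natCast, hzp, one_zpow, one_mul]
  exact Subgroup.pow_mem _ (Subgroup.zpow_mem _ (Subgroup.mem_zpowers c) a) p

theorem commutatorElement_mem_of_normal {C : Subgroup G} [C.Normal] (hc : c ∈ C) (g : G) :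
    ⁅c, g⁆ ∈ C :=
  Subgroup.commutator_le_left C ⊤ (Subgroup.commutator_mem_commutator hc (Subgroup.mem_top g))

theorem commutator_eq_zpowers_commutatorElement [Finite G] (hz : z ∈ Subgroup.center G)
    [hC : (Subgroup.zpowers z ⊔ Subgroup.zpowers c).Normal]
    (hCg : Subgroup.zpowers z ⊔ Subgroup.zpowers c ⊔ Subgroup.zpowers g = ⊤) :
    commutator G = Subgroup.zpowers ⁅c, g⁆ := by
  set C := Subgroup.zpowers z ⊔ Subgroup.zpowers c
  have hcC : c ∈ C := Subgroup.mem_sup_right (Subgroup.mem_zpowers c)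
  have hgc : g * c * g⁻¹ ∈ C := hC.conj_mem c hcC g
  have hψ (x : G) (hx : x ∈ C) : ⁅x, g⁆ ∈ Subgroup.zpowers ⁅c, g⁆ := by
    obtain ⟨a, ha⟩ := exists_commutatorElement_eq_zpow_of_mem_sup hz
      (commute_of_mem_sup_zpowers hz hcC hgc) hx
    exact ha ▸ Subgroup.zpow_mem _ (Subgroup.mem_zpowers _) a
  have : (Subgroup.zpowers ⁅c, g⁆).Normal := by
    refine zpowers_normal_of_conj_mem hCg (fun a ha => ?_) ?_
    · rw [(commute_of_mem_sup_zpowers hz ha (commutatorElement_mem_of_normal hcC g)).eq,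
        mul_inv_cancel_right]
      exact Subgroup.mem_zpowers _
    · rw [show g * ⁅c, g⁆ * g⁻¹ = ⁅g * c * g⁻¹, g⁆ by simp only [commutatorElement_def]; group]
      exact hψ _ hgc
  refine le_antisymm (commutator_le_of_sup_zpowers_eq_top hCg (fun a ha b hb => ?_) hψ) ?_
  · rw [commutatorElement_eq_one_iff_commute.2 (commute_of_mem_sup_zpowers hz ha hb)]
    exact one_mem _
  · rw [Subgroup.zpowers_le, commutator_def]
    exact Subgroup.commutator_mem_commutator (Subgroup.mem_top c) (Subgroup.mem_top g)

end CentralExtension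

section Blackburn

variable {p : ℕ} [hp : Fact p.Prime] {G : Type*} [Group G] [Finite G]

theorem IsPGroup.blackburnSubgroup_le_zpowers (hG : IsPGroup p G) {z c g : G}
    (hz : z ∈ Subgroup.center G) (hzp : z ^ p = 1)
    [hC : (Subgroup.zpowers z ⊔ Subgroup.zpowers c).Normal]
    (hCg : Subgroup.zpowers z ⊔ Subgroup.zpowers c ⊔ Subgroup.zpowers g = ⊤) :
    blackburnSubgroup G ≤ Subgroup.zpowers c := by
  set C := Subgroup.zpowers z ⊔ Subgroup.zpowers c
  set d := ⁅c, g⁆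
  have hcC : c ∈ C := Subgroup.mem_sup_right (Subgroup.mem_zpowers c)
  have hdC : d ∈ C := commutatorElement_mem_of_normal hcC g
  have hG' : commutator G = Subgroup.zpowers d := commutator_eq_zpowers_commutatorElement hz hCg
  obtain ⟨i, hi⟩ := exists_commutatorElement_eq_zpow_of_mem_sup hz
    (commute_of_mem_sup_zpowers hz hcC (hC.conj_mem c hcC g)) hdC
  have : (Subgroup.zpowers d).Normal := hG' ▸ inferInstance
  have := zpowers_pow_normal (d := d) p
  have hG₃ : (⊤ : Subgroup G).lowerCentralSeries 2 ≤ Subgroup.zpowers (d ^ p) := by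
    rw [Subgroup.lowerCentralSeries_succ, Subgroup.top_lowerCentralSeries_one, hG']
    refine commutator_zpowers_le (commutatorElement_mem_of_sup_zpowers_eq_top hCg
      (fun a ha => ?_) (hG.commutatorElement_mem_zpowers_pow hi))
    rw [commutatorElement_eq_one_iff_commute.2 (commute_of_mem_sup_zpowers hz hdC ha)]
    exact one_mem _
  exact (sup_le (hG.map_frattini_le_zpowers_pow hG') hG₃).trans
    (Subgroup.zpowers_le.2 (pow_mem_zpowers_of_mem_sup hz hzp hdC))

theorem IsPGroup.isMetacyclic_of_isMetacyclic_quotient_zpowers (hG : IsPGroup p G) {z : G}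
    (hz : z ∈ Subgroup.center G) (hzp : z ^ p = 1) (hzN : z ∈ blackburnSubgroup G)
    [(Subgroup.zpowers z).Normal] (h : IsMetacyclic (G ⧸ Subgroup.zpowers z)) :
    IsMetacyclic G := by
  obtain ⟨c, g, hC, hCg⟩ := h.exists_of_quotient
  by_cases hzc : z ∈ Subgroup.zpowers c
  · rw [sup_eq_right.2 (Subgroup.zpowers_le.2 hzc)] at hC hCg
    exact isMetacyclic_iff_exists_zpowers.2 ⟨c, g, hC, hCg⟩
  · exact absurd (hG.blackburnSubgroup_le_zpowers hz hzp hCg hzN) hzc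

theorem IsPGroup.isMetacyclic_of_isMetacyclic_quotient_blackburnSubgroup (hG : IsPGroup p G)
    (h : IsMetacyclic (G ⧸ blackburnSubgroup G)) : IsMetacyclic G := by
  induction hn : Nat.card G using Nat.strong_induction_on generalizing G with
  | _ n ih =>
  by_cases hN : blackburnSubgroup G = ⊥
  · let e := (QuotientGroup.quotientMulEquivOfEq hN).trans QuotientGroup.quotientBot
    exact h.of_surjective (f := e.toMonoidHom) e.surjective
  obtain ⟨z, ⟨hzN, hz⟩, hzp⟩ := hG.exists_mem_inf_center_orderOf_eq hN
  have := zpowers_normal_of_mem_center hz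
  have hlt : Nat.card (G ⧸ Subgroup.zpowers z) < n := by
    rw [← hn, Subgroup.card_eq_card_quotient_mul_card_subgroup (Subgroup.zpowers z),
      Nat.card_zpowers, hzp]
    exact lt_mul_of_one_lt_right Nat.card_pos hp.out.one_lt
  refine hG.isMetacyclic_of_isMetacyclic_quotient_zpowers hz (hzp ▸ pow_orderOf_eq_one z) hzN
    (ih _ hlt (hG.to_quotient _) ?_ rfl)
  exact h.quotient_blackburnSubgroup_of_surjective (QuotientGroup.mk'_surjective _)

end Blackburn

/-- Blackburn's criterion: a finite p-group G is metacyclic iff G/(Φ(G')G₃)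
is metacyclic. -/
theorem metacyclic_iff_quotient_metacyclic {p : ℕ} (hp : p.Prime)
    (G : Type*) [Group G] [Finite G] (hG : IsPGroup p G)
    (N : Subgroup G)
    (hN : N = (frattini (commutator G)).map (commutator G).subtype ⊔
      (⊤ : Subgroup G).lowerCentralSeries 2)
    [N.Normal] :
    (∃ (C : Subgroup G) (_ : C.Normal), IsCyclic C ∧ IsCyclic (G ⧸ C)) ↔
      (∃ (C : Subgroup (G ⧸ N)) (_ : C.Normal), IsCyclic C ∧ IsCyclic ((G ⧸ N) ⧸ C)) := by
  have : Fact p.Prime := ⟨hp⟩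
  change N = blackburnSubgroup G at hN
  subst hN
  exact ⟨IsMetacyclic.of_surjective (QuotientGroup.mk'_surjective _),
    hG.isMetacyclic_of_isMetacyclic_quotient_blackburnSubgroup⟩
end

section
/- Let G be a finite metahamiltonian p-group with elementary abelian derived subgroup. If the nilpotency class of G is 3, then G is generated by two elements and p is odd. -/
/-!
In a group of class at most 3 the triple commutator `⁅⁅x, y⁆, z⁆` is central and multiplicative
in each argument. If every non-abelian subgroup is normal, then `⁅x, y⁆ ≠ 1` forces
`⁅z, x⁆ ∈ ⟨x, y⟩`, whose elements are `x ^ i * y ^ j * ⁅x, y⁆ ^ k` modulo `γ₃`; bracketing such a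
relation with one more element gives identities between triple commutators.

First, `⁅⁅a, b⁆, b⁆ ≠ 1` for some `a, b`: otherwise the triple commutator is alternating and the
relation for `⁅z, x⁆ ∈ ⟨x, y⟩` puts `⁅x, y⁆` into `γ₃`. For `p = 2` the relation for
`⁅b, a⁆ ∈ ⟨a, b ^ 2⟩` gives `⁅⁅a, b⁆, a⁆ = ⁅⁅a, b⁆, b⁆⁻¹`, and this identity for the pairs
`(a, b)` and `(a * b, a)` is contradictory. For odd `p` all `p`-th powers are central, because
`⁅x ^ p, y⁆ = ⁅x, y⁆ ^ p * ⁅⁅x, y⁆, x⁆ ^ (-p * (p - 1) / 2)` and `p` divides `p * (p - 1) / 2`.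
If `⟨a, b⟩` lay in a maximal subgroup `M`, the relation for `⁅a, b⁆ ∈ ⟨b, h⟩` would make
`⁅⁅a, b⁆, b⁆` a power of `⁅⁅b, h⁆, b⁆` for every `h ∉ M`, which fails for `h = g * a ^ t` with
suitable `g ∉ M` and `t`.
-/

open Subgroup

open scoped commutatorElement

section Commutator

variable {G : Type*} [Group G]

theorem commutatorElement_mem_commutator (x y : G) : ⁅x, y⁆ ∈ commutator G :=
  commutator_mem_commutator (mem_top x) (mem_top y)

theorem commutatorElement_mem_lowerCentralSeries_two {c : G} (hc : c ∈ commutator G) (x : G) :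
    ⁅c, x⁆ ∈ (⊤ : Subgroup G).lowerCentralSeries 2 :=
  commutator_mem_commutator hc (mem_top x)

theorem commutatorElement_eq_one_of_mem_center {w : G} (hw : w ∈ center G) (x : G) :
    ⁅w, x⁆ = 1 :=
  Commute.commutator_eq (mem_center_iff.mp hw x).symm

theorem conj_eq_of_mem_center {w : G} (hw : w ∈ center G) (x : G) : x * w * x⁻¹ = w :=
  mul_inv_eq_of_eq_mul (mem_center_iff.mp hw x)

theorem commutatorElement_mul_left_of_commute {x y z : G} (h : Commute y z) :
    ⁅x * y, z⁆ = ⁅x, z⁆ := by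
  rw [commutatorElement_mul_left_eq_conj_mul, h.commutator_eq, mul_one, mul_inv_cancel, one_mul]

theorem commutatorElement_mul_right_of_commute {x y z : G} (h : Commute x z) :
    ⁅x, y * z⁆ = ⁅x, y⁆ := by
  rw [commutatorElement_mul_right_eq_mul_conj, h.commutator_eq, mul_one, mul_inv_cancel_right]

theorem mem_of_zpow_mem_of_pow_prime_pow_eq_one {p : ℕ} (hp : p.Prime) {H : Subgroup G} {x : G}
    {n : ℕ} (hx : x ^ p ^ n = 1) {k : ℤ} (hk : ¬(p : ℤ) ∣ k) (hxk : x ^ k ∈ H) : x ∈ H := by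
  obtain ⟨s, t, hst⟩ :=
    (((Nat.prime_iff_prime_int.mp hp).coprime_iff_not_dvd).mpr hk).pow_left (m := n)
  have hx' : x ^ ((p : ℤ) ^ n) = 1 := by exact_mod_cast hx
  have : x = (x ^ k) ^ t := by
    conv_lhs => rw [← zpow_one x, ← hst, zpow_add, mul_comm s, zpow_mul, hx', one_zpow, one_mul,
      mul_comm, zpow_mul]
  exact this ▸ zpow_mem hxk t

theorem IsPGroup.dvd_of_zpow_mem {p : ℕ} (hp : p.Prime) (hG : IsPGroup p G) {M : Subgroup G}
    {g : G} (hg : g ∉ M) {j : ℤ} (hj : g ^ j ∈ M) : (p : ℤ) ∣ j := by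
  obtain ⟨n, hn⟩ := hG g
  by_contra hpj
  exact hg (mem_of_zpow_mem_of_pow_prime_pow_eq_one hp hn hpj hj)

theorem commutator_le_of_isCoatom {M : Subgroup G} [M.Normal] (hM : IsCoatom M) :
    commutator G ≤ M := by
  have hmem {x m : G} (hm : m ∈ M) : ⁅x, m⁆ ∈ M := by
    rw [commutatorElement_def]
    exact mul_mem (Normal.conj_mem ‹_› m hm x) (inv_mem hm)
  refine commutator_le.mpr fun x _ y _ ↦ ?_
  by_cases hx : x ∈ M
  · rw [← commutatorElement_inv]
    exact inv_mem (hmem hx)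
  have hsup : M ⊔ zpowers x = ⊤ := hM.2 _ (left_lt_sup.mpr fun h ↦ hx (h (mem_zpowers x)))
  obtain ⟨m, hm, _, ⟨n, rfl⟩, rfl⟩ := mem_sup_of_normal_left.mp (hsup ▸ mem_top y)
  rw [commutatorElement_mul_right_of_commute ((Commute.refl x).zpow_right n)]
  exact hmem hm

theorem lowerCentralSeries_le_center_of_succ_eq_bot {n : ℕ}
    (h : (⊤ : Subgroup G).lowerCentralSeries (n + 1) = ⊥) :
    (⊤ : Subgroup G).lowerCentralSeries n ≤ center G := fun w hw ↦ mem_center_iff.mpr fun g ↦ by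
  have : ⁅w, g⁆ ∈ (⊤ : Subgroup G).lowerCentralSeries (n + 1) :=
    commutator_mem_commutator hw (mem_top g)
  rw [h, mem_bot] at this
  exact (commutatorElement_eq_one_iff_commute.mp this).symm

theorem exists_commutatorElement_commutatorElement_ne_one
    (h : (⊤ : Subgroup G).lowerCentralSeries 2 ≠ ⊥) : ∃ x y z : G, ⁅⁅x, y⁆, z⁆ ≠ 1 := by
  contrapose! h
  have hG' : commutator G ≤ center G := commutator_le.mpr fun x _ y _ ↦
    mem_center_iff.mpr fun z ↦ (commutatorElement_eq_one_iff_commute.mp (h x y z)).symm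
  exact eq_bot_iff.mpr <| commutator_le.mpr fun c hc g _ ↦
    commutatorElement_eq_one_of_mem_center (hG' hc) g

theorem conj_zpow_eq_of_conj_eq_mul {a b w : G} (hw : w ∈ center G) (h : a * b * a⁻¹ = w * b)
    (n : ℤ) : a * b ^ n * a⁻¹ = w ^ n * b ^ n := by
  rw [← conj_zpow, h, Commute.mul_zpow (mem_center_iff.mp hw b).symm]

section CentralCommutator

variable {u v : G} (huv : ⁅u, v⁆ ∈ center G)
include huv

theorem zpow_mul_zpow_eq_of_commutatorElement_mem_center (i j : ℤ) :
    v ^ j * u ^ i = ⁅u, v⁆ ^ (-(i * j)) * u ^ i * v ^ j := by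
  have hvu : v * u ^ i * v⁻¹ = ⁅u, v⁆ ^ (-i) * u ^ i := by
    rw [zpow_neg, ← inv_zpow]
    exact conj_zpow_eq_of_conj_eq_mul (inv_mem huv) (by rw [commutatorElement_def]; group) i
  have hui : u ^ i * v * (u ^ i)⁻¹ = ⁅u, v⁆ ^ i * v := by
    rw [show u ^ i * v * (u ^ i)⁻¹ = (v * u ^ i * v⁻¹ * (u ^ i)⁻¹)⁻¹ * v by group, hvu]
    group
  have huvj := conj_zpow_eq_of_conj_eq_mul (zpow_mem huv i) hui j
  rw [zpow_neg, zpow_mul, eq_mul_inv_iff_mul_eq.mpr huvj.symm]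
  group

theorem exists_eq_zpow_mul_zpow_mul_commutatorElement_zpow {z : G} (hz : z ∈ closure {u, v}) :
    ∃ i j k : ℤ, z = u ^ i * v ^ j * ⁅u, v⁆ ^ k := by
  have hv (e i j k : ℤ) :
      v ^ e * (u ^ i * v ^ j * ⁅u, v⁆ ^ k) = u ^ i * v ^ (e + j) * ⁅u, v⁆ ^ (k - i * e) := by
    have hc : ⁅u, v⁆ ^ (-(i * e)) ∈ center G := zpow_mem huv _
    calc v ^ e * (u ^ i * v ^ j * ⁅u, v⁆ ^ k)
        = ⁅u, v⁆ ^ (-(i * e)) * (u ^ i * v ^ e * v ^ j * ⁅u, v⁆ ^ k) := by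
          rw [← mul_assoc, ← mul_assoc, zpow_mul_zpow_eq_of_commutatorElement_mem_center huv]
          group
      _ = u ^ i * v ^ e * v ^ j * ⁅u, v⁆ ^ k * ⁅u, v⁆ ^ (-(i * e)) :=
          (mem_center_iff.mp hc _).symm
      _ = u ^ i * v ^ (e + j) * ⁅u, v⁆ ^ (k - i * e) := by
          rw [zpow_add, sub_eq_add_neg, zpow_add, mul_assoc _ (⁅u, v⁆ ^ k), mul_assoc (u ^ i)]
  induction hz using closure_induction_left with
  | one => exact ⟨0, 0, 0, by simp⟩
  | mul_left x hx y _ ih =>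
    obtain ⟨i, j, k, rfl⟩ := ih
    rcases hx with rfl | rfl
    · exact ⟨i + 1, j, k, by group⟩
    · exact ⟨i, 1 + j, k - i * 1, by rw [← hv, zpow_one]⟩
  | inv_mul_cancel x hx y _ ih =>
    obtain ⟨i, j, k, rfl⟩ := ih
    rcases hx with rfl | rfl
    · exact ⟨i - 1, j, k, by group⟩
    · exact ⟨i, -1 + j, k - i * -1, by rw [← hv, zpow_neg_one]⟩

end CentralCommutator

theorem exists_eq_zpow_mul_zpow_mul_commutatorElement_zpow_mul {N : Subgroup G} [N.Normal]
    {u v z : G} (huv : ∀ g, ⁅⁅u, v⁆, g⁆ ∈ N) (hz : z ∈ closure {u, v}) :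
    ∃ i j k : ℤ, ∃ w ∈ N, z = u ^ i * v ^ j * ⁅u, v⁆ ^ k * w := by
  let π := QuotientGroup.mk' N
  have hc : ⁅π u, π v⁆ ∈ center (G ⧸ N) := mem_center_iff.mpr fun q ↦ by
    obtain ⟨g, rfl⟩ := QuotientGroup.mk'_surjective N q
    have : ⁅⁅π u, π v⁆, π g⁆ = 1 := by
      rw [← map_commutatorElement, ← map_commutatorElement]
      exact (QuotientGroup.eq_one_iff _).mpr (huv g)
    exact (commutatorElement_eq_one_iff_commute.mp this).symm
  have hz' : π z ∈ closure {π u, π v} := by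
    rw [← Set.image_pair, ← MonoidHom.map_closure]
    exact mem_map_of_mem _ hz
  obtain ⟨i, j, k, h⟩ := exists_eq_zpow_mul_zpow_mul_commutatorElement_zpow hc hz'
  refine ⟨i, j, k, (u ^ i * v ^ j * ⁅u, v⁆ ^ k)⁻¹ * z, ?_, by group⟩
  rw [← QuotientGroup.eq_one_iff, ← QuotientGroup.mk'_apply, map_mul, h, map_inv, map_mul,
    map_mul, map_zpow, map_zpow, map_zpow, map_commutatorElement, inv_mul_cancel]

end Commutator

namespace ClassThree

variable {G : Type*} [Group G]
-- `lowerCentralSeries 2` is `γ₃`: the series starts with `lowerCentralSeries 0 = ⊤`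
variable (hZ : (⊤ : Subgroup G).lowerCentralSeries 2 ≤ center G)
include hZ

theorem commutatorElement_mem_center_left {c : G} (hc : c ∈ commutator G) (x : G) :
    ⁅c, x⁆ ∈ center G :=
  hZ (commutatorElement_mem_lowerCentralSeries_two hc x)

theorem commutatorElement_mem_center_right {c : G} (hc : c ∈ commutator G) (x : G) :
    ⁅x, c⁆ ∈ center G := by
  rw [← commutatorElement_inv]
  exact inv_mem (commutatorElement_mem_center_left hZ hc x)

theorem commutatorElement_mul_right_of_mem_commutator {c : G} (hc : c ∈ commutator G)
    (x y : G) : ⁅c, x * y⁆ = ⁅c, x⁆ * ⁅c, y⁆ := by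
  rw [commutatorElement_mul_right_eq_mul_conj, mul_assoc _ x, mul_assoc,
    conj_eq_of_mem_center (commutatorElement_mem_center_left hZ hc y)]

theorem commutatorElement_mul_left_of_mem_commutator (c : G) {d : G} (hd : d ∈ commutator G)
    (x : G) : ⁅c * d, x⁆ = ⁅c, x⁆ * ⁅d, x⁆ := by
  have hdx := commutatorElement_mem_center_left hZ hd x
  rw [commutatorElement_mul_left_eq_conj_mul, conj_eq_of_mem_center hdx, mem_center_iff.mp hdx]

theorem commutatorElement_zpow_left_of_mem_commutator {c : G} (hc : c ∈ commutator G) (x : G)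
    (n : ℤ) : ⁅c ^ n, x⁆ = ⁅c, x⁆ ^ n :=
  map_zpow (MonoidHom.mk' (fun d : commutator G ↦ ⁅(d : G), x⁆)
    fun d e ↦ commutatorElement_mul_left_of_mem_commutator hZ d e.2 x) ⟨c, hc⟩ n

theorem commutatorElement_commutatorElement_inv_left (x y z : G) :
    ⁅⁅y, x⁆, z⁆ = ⁅⁅x, y⁆, z⁆⁻¹ := by
  rw [← commutatorElement_inv x y, ← zpow_neg_one,
    commutatorElement_zpow_left_of_mem_commutator hZ (commutatorElement_mem_commutator x y),
    zpow_neg_one]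

theorem commutatorElement_commutatorElement_mul_left (x₁ x₂ y z : G) :
    ⁅⁅x₁ * x₂, y⁆, z⁆ = ⁅⁅x₁, y⁆, z⁆ * ⁅⁅x₂, y⁆, z⁆ := by
  have hw := commutatorElement_mem_center_right hZ (commutatorElement_mem_commutator x₂ y) x₁
  have hd := commutatorElement_mem_center_left hZ (commutatorElement_mem_commutator x₂ y) z
  rw [show ⁅x₁ * x₂, y⁆ = ⁅x₁, ⁅x₂, y⁆⁆ * (⁅x₂, y⁆ * ⁅x₁, y⁆) by group, ← mem_center_iff.mp hw,
    commutatorElement_mul_left_of_commute (mem_center_iff.mp hw z).symm,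
    commutatorElement_mul_left_of_mem_commutator hZ _ (commutatorElement_mem_commutator x₁ y)]
  exact (mem_center_iff.mp hd _).symm

theorem commutatorElement_commutatorElement_mul_mid (x y₁ y₂ z : G) :
    ⁅⁅x, y₁ * y₂⁆, z⁆ = ⁅⁅x, y₁⁆, z⁆ * ⁅⁅x, y₂⁆, z⁆ := by
  rw [commutatorElement_commutatorElement_inv_left hZ (y₁ * y₂),
    commutatorElement_commutatorElement_mul_left hZ, mul_inv_rev,
    ← commutatorElement_commutatorElement_inv_left hZ y₁,
    ← commutatorElement_commutatorElement_inv_left hZ y₂]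
  exact mem_center_iff.mp
    (commutatorElement_mem_center_left hZ (commutatorElement_mem_commutator _ _) z) _

theorem commutatorElement_commutatorElement_mul_right (x y z₁ z₂ : G) :
    ⁅⁅x, y⁆, z₁ * z₂⁆ = ⁅⁅x, y⁆, z₁⁆ * ⁅⁅x, y⁆, z₂⁆ :=
  commutatorElement_mul_right_of_mem_commutator hZ (commutatorElement_mem_commutator x y) z₁ z₂

theorem commutatorElement_commutatorElement_zpow_left (x y z : G) (n : ℤ) :
    ⁅⁅x ^ n, y⁆, z⁆ = ⁅⁅x, y⁆, z⁆ ^ n :=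
  map_zpow (MonoidHom.mk' (fun x ↦ ⁅⁅x, y⁆, z⁆)
    fun x₁ x₂ ↦ commutatorElement_commutatorElement_mul_left hZ x₁ x₂ y z) x n

theorem commutatorElement_commutatorElement_swap_right (hA : ∀ a b : G, ⁅⁅a, b⁆, b⁆ = 1)
    (x y z : G) : ⁅⁅x, z⁆, y⁆ = ⁅⁅x, y⁆, z⁆⁻¹ := by
  have h := hA x (y * z)
  rw [commutatorElement_commutatorElement_mul_mid hZ,
    commutatorElement_commutatorElement_mul_right hZ,
    commutatorElement_commutatorElement_mul_right hZ, hA, hA, one_mul, mul_one] at h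
  exact eq_inv_of_mul_eq_one_right h

theorem commutatorElement_zpow_add_one_left (x y : G) (n : ℤ) :
    ⁅x ^ (n + 1), y⁆ = ⁅x ^ n, y⁆ * ⁅x, y⁆ * ⁅⁅x, y⁆, x⁆ ^ (-n) := by
  have hw := commutatorElement_mem_center_right hZ (commutatorElement_mem_commutator (x ^ n) y) x
  rw [add_comm, zpow_one_add,
    show ⁅x * x ^ n, y⁆ = ⁅x, ⁅x ^ n, y⁆⁆ * (⁅x ^ n, y⁆ * ⁅x, y⁆) by group,
    ← mem_center_iff.mp hw, ← commutatorElement_inv ⁅x ^ n, y⁆ x,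
    commutatorElement_commutatorElement_zpow_left hZ, ← zpow_neg]

theorem commutatorElement_zpow_left (x y : G) (n : ℤ) :
    ⁅x ^ n, y⁆ = ⁅x, y⁆ ^ n * ⁅⁅x, y⁆, x⁆ ^ (-(n * (n - 1) / 2)) := by
  have hf := commutatorElement_mem_center_left hZ (commutatorElement_mem_commutator x y) x
  have hE (m : ℤ) : (m + 1) * (m + 1 - 1) / 2 = m * (m - 1) / 2 + m := by
    rw [show (m + 1) * (m + 1 - 1) = m * (m - 1) + m * 2 by ring,
      Int.add_mul_ediv_right _ _ two_ne_zero]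
  have hstep (m : ℤ) : ⁅x, y⁆ ^ (m + 1) * ⁅⁅x, y⁆, x⁆ ^ (-((m + 1) * (m + 1 - 1) / 2)) =
      ⁅x, y⁆ ^ m * ⁅⁅x, y⁆, x⁆ ^ (-(m * (m - 1) / 2)) * ⁅x, y⁆ * ⁅⁅x, y⁆, x⁆ ^ (-m) := by
    rw [hE, neg_add, zpow_add_one, zpow_add, ← mul_assoc, mul_assoc (⁅x, y⁆ ^ m) ⁅x, y⁆,
      mem_center_iff.mp (zpow_mem hf (-(m * (m - 1) / 2))) ⁅x, y⁆, ← mul_assoc]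
  have key (m : ℤ) : ⁅x ^ m, y⁆ = ⁅x, y⁆ ^ m * ⁅⁅x, y⁆, x⁆ ^ (-(m * (m - 1) / 2)) ↔
      ⁅x ^ (m + 1), y⁆ = ⁅x, y⁆ ^ (m + 1) * ⁅⁅x, y⁆, x⁆ ^ (-((m + 1) * (m + 1 - 1) / 2)) := by
    rw [commutatorElement_zpow_add_one_left hZ, hstep, mul_left_inj, mul_left_inj]
  induction n using Int.induction_on with
  | zero => simp
  | succ i ih => exact (key _).mp ih
  | pred i ih => exact (key _).mpr (by rwa [sub_add_cancel])

theorem pow_mem_center_of_odd {p : ℕ} (hp : Odd p) (hel : ∀ c ∈ commutator G, c ^ p = 1)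
    (g : G) : g ^ p ∈ center G := by
  obtain ⟨t, ht⟩ := hp
  have hE : (p : ℤ) * (p - 1) / 2 = p * t := by
    rw [ht, show ((2 * t + 1 : ℕ) : ℤ) * ((2 * t + 1 : ℕ) - 1) = (2 * t + 1 : ℕ) * t * 2 by
      push_cast; ring, Int.mul_ediv_cancel _ two_ne_zero]
  refine mem_center_iff.mpr fun x ↦ (commutatorElement_eq_one_iff_commute.mp ?_).symm
  rw [← zpow_natCast, commutatorElement_zpow_left hZ, hE, ← mul_neg, zpow_mul, zpow_natCast,
    zpow_natCast, hel _ (commutatorElement_mem_commutator g x),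
    hel _ (commutatorElement_mem_commutator _ g), one_zpow, one_mul]

theorem commutatorElement_zpow_mul_zpow_mul_commutatorElement_zpow_mul {X Y w : G}
    (hw : w ∈ (⊤ : Subgroup G).lowerCentralSeries 2) (i j k : ℤ) (V : G) :
    ⁅X ^ i * Y ^ j * ⁅X, Y⁆ ^ k * w, V⁆ = ⁅X ^ i * Y ^ j, V⁆ * ⁅⁅X, Y⁆, V⁆ ^ k := by
  have hXY := commutatorElement_mem_commutator X Y
  rw [commutatorElement_mul_left_of_commute (mem_center_iff.mp (hZ hw) V).symm,
    commutatorElement_mul_left_of_mem_commutator hZ _ (zpow_mem hXY k),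
    commutatorElement_zpow_left_of_mem_commutator hZ hXY]

end ClassThree

def IsMetahamiltonian (G : Type*) [Group G] : Prop :=
  ∀ H : Subgroup G, ¬IsMulCommutative H → H.Normal

namespace IsMetahamiltonian

open ClassThree

variable {G : Type*} [Group G] (hmh : IsMetahamiltonian G)
include hmh

theorem commutatorElement_mem_closure_pair {x y : G} (hxy : ⁅x, y⁆ ≠ 1) (z : G) :
    ⁅z, x⁆ ∈ closure {x, y} := by
  have hx : x ∈ closure {x, y} := subset_closure (Set.mem_insert x _)
  have hy : y ∈ closure {x, y} := subset_closure (Set.mem_insert_of_mem x rfl)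
  have hN := hmh _ fun h ↦ hxy <| commutatorElement_eq_one_iff_commute.mpr <|
    isMulCommutative_iff_of_setLike.mp h x hx y hy
  rw [commutatorElement_def]
  exact mul_mem (hN.conj_mem x hx z) (inv_mem hx)

variable (hZ : (⊤ : Subgroup G).lowerCentralSeries 2 ≤ center G)
include hZ

theorem exists_commutatorElement_commutatorElement_self_ne_one {p : ℕ} (hp : p.Prime)
    (hel : ∀ c ∈ commutator G, c ^ p = 1) (h : ∃ x y z : G, ⁅⁅x, y⁆, z⁆ ≠ 1) :
    ∃ a b : G, ⁅⁅a, b⁆, b⁆ ≠ 1 := by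
  by_contra! hA
  obtain ⟨x, y, z, hxyz⟩ := h
  have hc := commutatorElement_mem_commutator x y
  have hxy : ⁅x, y⁆ ≠ 1 := fun h ↦ hxyz (by rw [h, commutatorElement_one_left])
  have hxyx : ⁅⁅x, y⁆, x⁆ = 1 := by
    rw [← inv_inj, ← commutatorElement_commutatorElement_inv_left hZ, hA, inv_one]
  obtain ⟨i, j, k, w, hw, hzx⟩ := exists_eq_zpow_mul_zpow_mul_commutatorElement_zpow_mul
    (commutatorElement_mem_lowerCentralSeries_two hc) (hmh.commutatorElement_mem_closure_pair hxy z)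
  have key : ⁅⁅x, y⁆, z⁆ = ⁅x, y⁆ ^ i := by
    rw [← inv_inv ⁅⁅x, y⁆, z⁆, ← commutatorElement_commutatorElement_swap_right hZ hA,
      ← commutatorElement_commutatorElement_inv_left hZ, hzx,
      commutatorElement_zpow_mul_zpow_mul_commutatorElement_zpow_mul hZ hw,
      commutatorElement_mul_left_of_commute ((Commute.refl y).zpow_left j),
      commutatorElement_zpow_left hZ, hxyx, hA, one_zpow, one_zpow, mul_one, mul_one]
  have hi : ¬(p : ℤ) ∣ i := by
    rintro ⟨e, rfl⟩
    rw [zpow_mul, zpow_natCast, hel _ hc, one_zpow] at key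
    exact hxyz key
  have hxyZ : ⁅x, y⁆ ∈ (⊤ : Subgroup G).lowerCentralSeries 2 :=
    mem_of_zpow_mem_of_pow_prime_pow_eq_one hp (n := 1) (by rw [pow_one]; exact hel _ hc) hi
      (key ▸ commutatorElement_mem_lowerCentralSeries_two hc z)
  exact hxyz (commutatorElement_eq_one_of_mem_center (hZ hxyZ) z)

theorem commutatorElement_commutatorElement_eq_inv_of_sq_eq_one
    (hel : ∀ c ∈ commutator G, c ^ 2 = 1) {a b : G} (hu : ⁅⁅a, b⁆, b⁆ ≠ 1) :
    ⁅⁅a, b⁆, a⁆ = ⁅⁅a, b⁆, b⁆⁻¹ := by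
  have hc := commutatorElement_mem_commutator a b
  have huZ := commutatorElement_mem_center_left hZ hc b
  have hvZ := commutatorElement_mem_center_left hZ hc a
  have hab2 : ⁅a, b * b⁆ = ⁅⁅a, b⁆, b⁆⁻¹ := by
    rw [show ⁅a, b * b⁆ = ⁅a, b⁆ * (⁅b, ⁅a, b⁆⁆ * ⁅a, b⁆) by group,
      ← commutatorElement_inv ⁅a, b⁆ b, ← mul_assoc, mem_center_iff.mp (inv_mem huZ), mul_assoc,
      ← sq, hel _ hc, mul_one]
  obtain ⟨i, j, k, w, hw, hba⟩ := exists_eq_zpow_mul_zpow_mul_commutatorElement_zpow_mul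
    (commutatorElement_mem_lowerCentralSeries_two (commutatorElement_mem_commutator a (b * b)))
    (hmh.commutatorElement_mem_closure_pair (hab2 ▸ inv_ne_one.mpr hu) b)
  have key : ⁅⁅a, b⁆, b⁆⁻¹ = ⁅a, b⁆ ^ i * ⁅⁅a, b⁆, a⁆ ^ (-(i * (i - 1) / 2)) := by
    rw [← commutatorElement_commutatorElement_inv_left hZ, hba,
      commutatorElement_zpow_mul_zpow_mul_commutatorElement_zpow_mul hZ hw,
      commutatorElement_mul_left_of_commute
        (((Commute.refl b).mul_left (Commute.refl b)).zpow_left j),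
      hab2, commutatorElement_eq_one_of_mem_center (inv_mem huZ), one_zpow, mul_one,
      commutatorElement_zpow_left hZ]
  -- only the parities of the two exponents matter, as `G'` has exponent 2
  rw [zpow_eq_zpow_emod' i (hel _ hc),
    zpow_eq_zpow_emod' _ (hel _ (commutatorElement_mem_commutator ⁅a, b⁆ a)), Nat.cast_ofNat] at key
  rcases Int.emod_two_eq_zero_or_one i with hi | hi
  · rcases Int.emod_two_eq_zero_or_one (-(i * (i - 1) / 2)) with he | he
    · rw [hi, he, zpow_zero, zpow_zero, one_mul, inv_eq_one] at key
      exact absurd key hu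
    · rw [hi, he, zpow_zero, zpow_one, one_mul] at key
      exact key.symm
  · rw [hi, zpow_one] at key
    have hcZ : ⁅a, b⁆ ∈ center G := by
      rw [eq_mul_inv_of_mul_eq key.symm]
      exact mul_mem (inv_mem huZ) (inv_mem (zpow_mem hvZ _))
    exact absurd (commutatorElement_eq_one_of_mem_center hcZ b) hu

theorem commutatorElement_commutatorElement_self_eq_one_of_sq_eq_one
    (hel : ∀ c ∈ commutator G, c ^ 2 = 1) (a b : G) : ⁅⁅a, b⁆, b⁆ = 1 := by
  by_contra hu
  have hbaa : ⁅⁅a * b, a⁆, a⁆ = ⁅⁅a, b⁆, b⁆ := by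
    rw [commutatorElement_commutatorElement_mul_left hZ, commutatorElement_self,
      commutatorElement_one_left, one_mul, commutatorElement_commutatorElement_inv_left hZ a b a,
      hmh.commutatorElement_commutatorElement_eq_inv_of_sq_eq_one hZ hel hu, inv_inv]
  have h := hmh.commutatorElement_commutatorElement_eq_inv_of_sq_eq_one hZ hel (hbaa ▸ hu)
  rw [commutatorElement_commutatorElement_mul_right hZ, hbaa,
    commutatorElement_commutatorElement_mul_left hZ, commutatorElement_self,
    commutatorElement_one_left, one_mul, commutatorElement_commutatorElement_inv_left hZ a b b,
    mul_inv_cancel, eq_comm, inv_eq_one] at h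
  exact hu h

section

variable {p : ℕ} (hp : p.Prime) (hG : IsPGroup p G) (hcen : ∀ g : G, g ^ p ∈ center G)
  {M : Subgroup G} (hGM : commutator G ≤ M)
include hp hG hcen hGM

theorem commutatorElement_commutatorElement_mem_zpowers_of_ne_one {a b h : G} (hb : b ∈ M)
    (hh : h ∉ M) (hbh : ⁅b, h⁆ ≠ 1) : ⁅⁅a, b⁆, b⁆ ∈ zpowers ⁅⁅b, h⁆, b⁆ := by
  have hbh' := commutatorElement_mem_commutator b h
  obtain ⟨i, j, k, w, hw, hab⟩ := exists_eq_zpow_mul_zpow_mul_commutatorElement_zpow_mul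
    (commutatorElement_mem_lowerCentralSeries_two hbh')
    (hmh.commutatorElement_mem_closure_pair hbh a)
  have hj : h ^ j ∈ M := by
    have hwM : w ∈ M := hGM (Subgroup.lowerCentralSeries_antitone ⊤ one_le_two hw)
    rw [show h ^ j = (b ^ i)⁻¹ * ⁅a, b⁆ * w⁻¹ * (⁅b, h⁆ ^ k)⁻¹ by rw [hab]; group]
    exact mul_mem (mul_mem (mul_mem (inv_mem (zpow_mem hb i))
      (hGM (commutatorElement_mem_commutator a b))) (inv_mem hwM))
      (inv_mem (zpow_mem (hGM hbh') k))
  obtain ⟨e, rfl⟩ := hG.dvd_of_zpow_mem hp hh hj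
  have hhj : h ^ ((p : ℤ) * e) ∈ center G := by
    rw [zpow_mul, zpow_natCast]
    exact zpow_mem (hcen h) e
  refine ⟨k, ?_⟩
  rw [hab, commutatorElement_zpow_mul_zpow_mul_commutatorElement_zpow_mul hZ hw,
    commutatorElement_mul_left_of_commute (mem_center_iff.mp hhj b).symm,
    ((Commute.refl b).zpow_left i).commutator_eq, one_mul]

theorem commutatorElement_commutatorElement_mem_zpowers {a b h : G} (hb : b ∈ M)
    (hu : ⁅⁅a, b⁆, b⁆ ≠ 1) (hh : h ∉ M) : ⁅⁅a, b⁆, b⁆ ∈ zpowers ⁅⁅b, h⁆, b⁆ := by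
  by_cases hbh : ⁅b, h⁆ = 1
  swap
  · exact hmh.commutatorElement_commutatorElement_mem_zpowers_of_ne_one hZ hp hG hcen hGM hb hh hbh
  -- replacing `h` by `⁅a, b⁆ * h` keeps `⁅⁅b, h⁆, b⁆` but makes `⁅b, h⁆` nontrivial
  have hc := commutatorElement_mem_commutator a b
  have hch : ⁅a, b⁆ * h ∉ M := fun hch ↦ hh ((mul_mem_cancel_left (hGM hc)).mp hch)
  have hbch : ⁅b, ⁅a, b⁆ * h⁆ ≠ 1 := by
    rw [commutatorElement_mul_right_eq_mul_conj, hbh, mul_one, mul_inv_cancel_right,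
      ← commutatorElement_inv]
    exact inv_ne_one.mpr hu
  have := hmh.commutatorElement_commutatorElement_mem_zpowers_of_ne_one hZ hp hG hcen hGM (a := a)
    hb hch hbch
  rwa [commutatorElement_commutatorElement_mul_mid hZ,
    commutatorElement_eq_one_of_mem_center (commutatorElement_mem_center_right hZ hc b),
    one_mul] at this

end

theorem closure_pair_eq_top {p : ℕ} (hp : p.Prime) [Finite G] (hG : IsPGroup p G)
    (hcen : ∀ g : G, g ^ p ∈ center G) (hel : ∀ c ∈ commutator G, c ^ p = 1) {a b : G}
    (hu : ⁅⁅a, b⁆, b⁆ ≠ 1) : closure {a, b} = ⊤ := by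
  by_contra hne
  obtain ⟨M, hM, hle⟩ := (eq_top_or_exists_le_coatom (closure {a, b})).resolve_left hne
  have : Fact p.Prime := ⟨hp⟩
  have : Group.IsNilpotent G := hG.isNilpotent
  have : M.Normal :=
    NormalizerCondition.normal_of_coatom M Group.normalizerCondition_of_isNilpotent hM
  have hGM := commutator_le_of_isCoatom hM
  have ha : a ∈ M := hle (subset_closure (Set.mem_insert a _))
  have hb : b ∈ M := hle (subset_closure (Set.mem_insert_of_mem a rfl))
  obtain ⟨g, -, hg⟩ := SetLike.exists_of_lt hM.lt_top
  obtain ⟨k, hk⟩ := mem_zpowers_iff.mp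
    (hmh.commutatorElement_commutatorElement_mem_zpowers hZ hp hG hcen hGM hb hu hg)
  have hF : ⁅⁅b, g⁆, b⁆ ^ p = 1 := hel _ (commutatorElement_mem_commutator _ _)
  have hk' : ¬(p : ℤ) ∣ k := by
    rintro ⟨e, rfl⟩
    rw [zpow_mul, zpow_natCast, hF, one_zpow] at hk
    exact hu hk.symm
  -- so `⁅⁅b, g⁆, b⁆` is a power `⁅⁅a, b⁆, b⁆ ^ t`, which `g * a ^ t` cancels
  obtain ⟨t, ht⟩ := mem_zpowers_iff.mp <| mem_of_zpow_mem_of_pow_prime_pow_eq_one hp (n := 1)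
    (by rwa [pow_one]) hk' (hk ▸ mem_zpowers ⁅⁅a, b⁆, b⁆)
  rw [hk] at ht
  have hgat : g * a ^ t ∉ M := fun h ↦ hg ((mul_mem_cancel_right (zpow_mem ha t)).mp h)
  have h1 : ⁅⁅b, g * a ^ t⁆, b⁆ = 1 := by
    rw [commutatorElement_commutatorElement_mul_mid hZ,
      commutatorElement_commutatorElement_inv_left hZ (a ^ t) b b,
      commutatorElement_commutatorElement_zpow_left hZ, ← ht, mul_inv_cancel]
  have := hmh.commutatorElement_commutatorElement_mem_zpowers hZ hp hG hcen hGM hb hu hgat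
  rw [h1, zpowers_one_eq_bot, mem_bot] at this
  exact hu this

end IsMetahamiltonian

open IsMetahamiltonian ClassThree in
theorem metahamiltonian_class_three_two_gen_p_odd_general {p : ℕ} (hp : p.Prime)
    (G : Type*) [Group G] [Finite G] (hG : IsPGroup p G)
    (hmh : ∀ H : Subgroup G, ¬IsMulCommutative H → H.Normal)
    (hel : ∀ x ∈ commutator G, x ^ p = 1)
    (hc3 : (⊤ : Subgroup G).lowerCentralSeries 3 = ⊥ ∧ (⊤ : Subgroup G).lowerCentralSeries 2 ≠ ⊥) :
    (∃ a b : G, Subgroup.closure {a, b} = ⊤) ∧ Odd p := by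
  have hZ := lowerCentralSeries_le_center_of_succ_eq_bot hc3.1
  obtain ⟨a, b, hu⟩ := exists_commutatorElement_commutatorElement_self_ne_one hmh hZ hp hel
    (exists_commutatorElement_commutatorElement_ne_one hc3.2)
  have hodd : Odd p := hp.odd_of_ne_two <| by
    rintro rfl
    exact hu (commutatorElement_commutatorElement_self_eq_one_of_sq_eq_one hmh hZ hel a b)
  exact ⟨⟨a, b, closure_pair_eq_top hmh hZ hp hG (pow_mem_center_of_odd hZ hodd hel) hel hu⟩,
    hodd⟩

/-- A finite metahamiltonian p-group with elementary abelian derived subgroup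
and nilpotency class exactly 3 is 2-generated, and p is odd. -/
theorem metahamiltonian_class_three_two_gen_p_odd {p : ℕ} (hp : p.Prime)
    (G : Type*) [Group G] [Finite G] (hG : IsPGroup p G)
    (hmh : ∀ H : Subgroup G, ¬IsMulCommutative H → H.Normal)
    (hcomm : IsMulCommutative (commutator G))
    (hel : ∀ x ∈ commutator G, x ^ p = 1)
    (hc3 : (⊤ : Subgroup G).lowerCentralSeries 3 = ⊥ ∧ (⊤ : Subgroup G).lowerCentralSeries 2 ≠ ⊥) :
    (∃ a b : G, Subgroup.closure {a, b} = ⊤) ∧ Odd p :=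
  metahamiltonian_class_three_two_gen_p_odd_general hp G hG hmh hel hc3
end

section
/- Let G be a finite metahamiltonian p-group with p ≠ 3. Then G/Z(G) has nilpotency class at most 2. -/
/-!
If `u` and `v` are conjugate and `H = ⟨u, v⟩` is not abelian, then `H` is normal and lies in every
non-abelian subgroup that contains a conjugate of `u`. In a nilpotent group this makes `c = [u, v]`
central in `H` (otherwise `⟨u, c⟩ = H`), so that `H' = ⟨c⟩`. If `g` does not commute with `c`, the
normal subgroup `⟨c, g⟩ = ⟨c⟩⟨g⟩` shows that `g` multiplies `u` and `v` by elements `c ^ k * g ^ i`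
of `H`; each such `g ^ i` is central in `H`, for otherwise it generates `H` together with `u` or
`v`, and `g` would fix the commutator of these generators, which generates `⟨c⟩`. Hence `g` fixes
`[u, v]`: commutators of conjugate elements are central.

As `[[x, y], y] = [x y x⁻¹, y]`, the quotient `G / Z(G)` is 2-Engel. In a 2-Engel group with central
triple commutators, `[[x, y], z]` is multiplicative in `y` and `z` and invariant under cyclic
rotation, so the Hall–Witt identity gives `[[x, y], z] ^ 3 = 1`; induction on the nilpotency class
then kills all triple commutators of a 2-Engel `p`-group with `p ≠ 3`.
-/

open Subgroup
open scoped commutatorElement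

section Commutators

variable {G : Type*} [Group G]

theorem commutatorElement_mul_right_of_commute_s17 {s r w : G} (hsr : Commute s r)
    (hr : Commute r ⁅s, w⁆) : ⁅s, r * w⁆ = ⁅s, w⁆ := by
  rw [commutatorElement_mul_right_eq_mul_conj, hsr.commutator_eq, one_mul, hr.eq,
    mul_inv_cancel_right]

theorem commutatorElement_mul_mul_of_commute {H : Subgroup G} {z₁ z₂ u v : G}
    (hz₁ : ∀ h ∈ H, Commute z₁ h) (hz₂ : ∀ h ∈ H, Commute z₂ h) (hz₂H : z₂ ∈ H)
    (hu : u ∈ H) (hv : v ∈ H) : ⁅z₁ * u, z₂ * v⁆ = ⁅u, v⁆ := by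
  have huv : ⁅u, v⁆ ∈ H := by
    rw [commutatorElement_def]
    exact mul_mem (mul_mem (mul_mem hu hv) (inv_mem hu)) (inv_mem hv)
  rw [commutatorElement_mul_left_eq_conj_mul,
    ((hz₁ _ hz₂H).mul_right (hz₁ v hv)).commutator_eq, mul_one,
    commutatorElement_mul_right_of_commute_s17 (hz₂ u hu).symm (hz₂ _ huv), (hz₁ _ huv).eq,
    mul_inv_cancel_right]

theorem commute_commutatorElement_of_conj_eq_mul {g s w r : G} (hgs : Commute g s)
    (hgw : g * w * g⁻¹ = r * w) (hsr : Commute s r) (hr : Commute r ⁅s, w⁆) :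
    Commute g ⁅s, w⁆ := by
  rw [Commute, SemiconjBy, ← mul_inv_eq_iff_eq_mul, conjugate_commutatorElement, hgw,
    hgs.eq, mul_inv_cancel_right, commutatorElement_mul_right_of_commute_s17 hsr hr]

theorem Subgroup.Normal.mem_of_isConj {K : Subgroup G} (hK : K.Normal) {a b : G}
    (hab : IsConj a b) (ha : a ∈ K) : b ∈ K := by
  obtain ⟨c, rfl⟩ := isConj_iff.1 hab
  exact hK.conj_mem a ha c

theorem Subgroup.Normal.commutatorElement_mem_left {K : Subgroup G} (hK : K.Normal) {g : G}
    (hg : g ∈ K) (w : G) : ⁅g, w⁆ ∈ K :=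
  commutator_le_left K ⊤ (commutator_mem_commutator hg (mem_top w))

theorem Subgroup.Normal.commutatorElement_mem_right {K : Subgroup G} (hK : K.Normal) {w : G}
    (hw : w ∈ K) (g : G) : ⁅g, w⁆ ∈ K :=
  commutator_le_right ⊤ K (commutator_mem_commutator (mem_top g) hw)

theorem exists_zpow_mul_zpow_of_mem_closure_pair {c g x : G} (hc : (zpowers c).Normal)
    (hx : x ∈ closure {c, g}) : ∃ k i : ℤ, x = c ^ k * g ^ i := by
  rw [← SetLike.mem_coe, Set.insert_eq, Subgroup.closure_union, ← zpowers_eq_closure,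
    ← zpowers_eq_closure, normal_mul, Set.mem_mul] at hx
  obtain ⟨_, ⟨k, rfl⟩, _, ⟨i, rfl⟩, rfl⟩ := hx
  exact ⟨k, i, rfl⟩

theorem commutatorElement_mem_of_mem_closure {k : Set G} {Z : Subgroup G}
    (hk : closure k ≤ centralizer Z) {t : G} (ht : ∀ x ∈ k, ⁅x, t⁆ ∈ Z) {s : G}
    (hs : s ∈ closure k) : ⁅s, t⁆ ∈ Z := by
  induction hs using closure_induction with
  | mem x hx => exact ht x hx
  | one => simp
  | mul x y hx _ hxt hyt =>
    rw [commutatorElement_mul_left_eq_conj_mul, ← mem_centralizer_iff.1 (hk hx) _ hyt,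
      mul_inv_cancel_right]
    exact mul_mem hyt hxt
  | inv x hx hxt =>
    rw [commutatorElement_inv_left, ← commutatorElement_inv, mul_assoc,
      mem_centralizer_iff.1 (hk hx) _ (inv_mem hxt), inv_mul_cancel_left]
    exact inv_mem hxt

theorem commutatorElement_mem_zpowers_of_mem_closure_pair {a b s t : G}
    (ha : Commute a ⁅a, b⁆) (hb : Commute b ⁅a, b⁆)
    (hs : s ∈ closure {a, b}) (ht : t ∈ closure {a, b}) : ⁅s, t⁆ ∈ zpowers ⁅a, b⁆ := by
  have hle : closure {a, b} ≤ centralizer (zpowers ⁅a, b⁆) := by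
    rw [closure_le]
    rintro x (rfl | rfl) <;> rw [SetLike.mem_coe, mem_centralizer_iff] <;>
      rintro _ ⟨k, rfl⟩
    exacts [(ha.zpow_right k).symm.eq, (hb.zpow_right k).symm.eq]
  have hgen : ∀ x ∈ ({a, b} : Set G), ∀ y ∈ ({a, b} : Set G), ⁅x, y⁆ ∈ zpowers ⁅a, b⁆ := by
    rintro x (hx | hx) y (hy | hy) <;> subst x y
    · rw [commutatorElement_self]; exact one_mem _
    · exact mem_zpowers _
    · rw [← commutatorElement_inv a b]; exact (zpowers _).inv_mem (mem_zpowers _)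
    · rw [commutatorElement_self]; exact one_mem _
  have hst : ∀ y ∈ ({a, b} : Set G), ⁅s, y⁆ ∈ zpowers ⁅a, b⁆ := fun y hy ↦
    commutatorElement_mem_of_mem_closure hle (fun x hx ↦ hgen x hx y hy) hs
  rw [← inv_mem_iff, commutatorElement_inv]
  exact commutatorElement_mem_of_mem_closure hle
    (fun y hy ↦ by rw [← inv_mem_iff, commutatorElement_inv]; exact hst y hy) ht

theorem QuotientGroup.commutatorElement_commutatorElement_self_eq_one {N : Subgroup G}
    [N.Normal] (h : ∀ x y : G, ⁅⁅x, y⁆, y⁆ ∈ N) (a b : G ⧸ N) : ⁅⁅a, b⁆, b⁆ = 1 := by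
  obtain ⟨x, rfl⟩ := QuotientGroup.mk'_surjective N a
  obtain ⟨y, rfl⟩ := QuotientGroup.mk'_surjective N b
  rw [← map_commutatorElement, ← map_commutatorElement, QuotientGroup.mk'_apply,
    QuotientGroup.eq_one_iff]
  exact h x y

theorem top_lowerCentralSeries_two_eq_bot_iff :
    (⊤ : Subgroup G).lowerCentralSeries 2 = ⊥ ↔ ∀ a b c : G, ⁅⁅a, b⁆, c⁆ = 1 := by
  refine ⟨fun h a b c ↦ ?_, fun h ↦ Subgroup.lowerCentralSeries_succ_eq_bot ⊤ ?_⟩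
  · rw [← mem_bot, ← h]
    exact commutator_mem_commutator (commutator_mem_commutator (mem_top a) (mem_top b))
      (mem_top c)
  · rw [top_lowerCentralSeries_one, commutator_def, commutator_le]
    exact fun a _ b _ ↦ mem_center_iff.2 fun c ↦
      (commutatorElement_eq_one_iff_commute.1 (h a b c)).symm.eq

end Commutators

section ClassThree

variable {G : Type*} [Group G] (hZ : ∀ a b c : G, ⁅⁅a, b⁆, c⁆ ∈ center G)
include hZ

theorem commutatorElement_commutatorElement_mul_right (a b c d : G) :
    ⁅⁅a, b⁆, c * d⁆ = ⁅⁅a, b⁆, c⁆ * ⁅⁅a, b⁆, d⁆ := by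
  rw [commutatorElement_mul_right_eq_mul_conj, mul_assoc _ c, ← (hZ a b d).comm c,
    ← mul_assoc, mul_inv_cancel_right]

theorem commutatorElement_commutatorElement_conj_right (a b x c : G) :
    ⁅⁅a, b⁆, x * c * x⁻¹⁆ = ⁅⁅a, b⁆, c⁆ := by
  have hx : ⁅⁅a, b⁆, x⁆ * ⁅⁅a, b⁆, x⁻¹⁆ = 1 := by
    rw [← commutatorElement_commutatorElement_mul_right hZ, mul_inv_cancel,
      commutatorElement_one_right]
  rw [commutatorElement_commutatorElement_mul_right hZ,
    commutatorElement_commutatorElement_mul_right hZ, ← (hZ a b c).comm, mul_assoc, hx, mul_one]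

theorem commutatorElement_commutatorElement_mul_middle (a b c d : G) :
    ⁅⁅a, b * c⁆, d⁆ = ⁅⁅a, b⁆, d⁆ * ⁅⁅a, c⁆, d⁆ := by
  have hconj : ⁅b * ⁅a, c⁆ * b⁻¹, d⁆ = ⁅⁅a, c⁆, d⁆ := by
    calc ⁅b * ⁅a, c⁆ * b⁻¹, d⁆ = b * ⁅⁅a, c⁆, b⁻¹ * d * b⁻¹⁻¹⁆ * b⁻¹ := by
          rw [conjugate_commutatorElement]; group
      _ = ⁅⁅a, c⁆, d⁆ := by
          rw [commutatorElement_commutatorElement_conj_right hZ, ← (hZ a c d).comm,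
            mul_inv_cancel_right]
  rw [commutatorElement_mul_right_eq_mul_conj, mul_assoc ⁅a, b⁆ b, mul_assoc ⁅a, b⁆,
    commutatorElement_mul_left_eq_conj_mul, hconj, ← (hZ a c d).comm, mul_inv_cancel_right,
    (hZ a c d).comm]

theorem commutatorElement_commutatorElement_swap_left (a b c : G) :
    ⁅⁅b, a⁆, c⁆ = ⁅⁅a, b⁆, c⁆⁻¹ := by
  rw [← commutatorElement_inv a b, commutatorElement_inv_left, ← commutatorElement_inv ⁅a, b⁆ c,
    mul_assoc, (inv_mem (hZ a b c)).comm, inv_mul_cancel_left]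

theorem commutatorElement_commutatorElement_mul_rotate (a b c : G) :
    ⁅⁅a, b⁆, c⁆ * ⁅⁅b, c⁆, a⁆ * ⁅⁅c, a⁆, b⁆ = 1 := by
  simpa only [commutatorElement_commutatorElement_conj_right hZ] using
    commutatorElement_commutatorElement_conj_mul a b c

theorem commutatorElement_commutatorElement_pow_three_eq_one
    (hE : ∀ a b : G, ⁅⁅a, b⁆, b⁆ = 1) (a b c : G) : ⁅⁅a, b⁆, c⁆ ^ 3 = 1 := by
  have hswap : ∀ a b c : G, ⁅⁅a, b⁆, c⁆ = ⁅⁅a, c⁆, b⁆⁻¹ := fun a b c ↦ by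
    have := hE a (b * c)
    rw [commutatorElement_commutatorElement_mul_middle hZ,
      commutatorElement_commutatorElement_mul_right hZ,
      commutatorElement_commutatorElement_mul_right hZ, hE, hE, one_mul, mul_one] at this
    exact eq_inv_of_mul_eq_one_left this
  have hrot : ∀ a b c : G, ⁅⁅b, c⁆, a⁆ = ⁅⁅a, b⁆, c⁆ := fun a b c ↦ by
    rw [hswap, commutatorElement_commutatorElement_swap_left hZ, inv_inv]
  have := commutatorElement_commutatorElement_mul_rotate hZ a b c
  rwa [hrot a b c, hrot b c a, hrot a b c, ← pow_three'] at this

end ClassThree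

section Nilpotent

variable {G : Type*} [Group G] [Group.IsNilpotent G]

theorem commute_of_mem_closure_commutatorElement {u v : G} (h : v ∈ closure {u, ⁅u, v⁆}) :
    Commute u v := by
  suffices ∀ u v : G, v ∈ closure {u, ⁅u, v⁆} → Commute u v from this u v h
  refine Group.nilpotent_center_quotient_ind
    (P := fun G _ _ ↦ ∀ u v : G, v ∈ closure {u, ⁅u, v⁆} → Commute u v) G ?_ ?_
  · intro G _ _ u v _
    exact Subsingleton.elim u v ▸ Commute.refl u
  · intro G _ _ ih u v h
    have hc : ⁅u, v⁆ ∈ center G := by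
      rw [← QuotientGroup.eq_one_iff, ← QuotientGroup.mk'_apply, map_commutatorElement]
      refine (ih _ _ ?_).commutator_eq
      have := mem_map_of_mem (QuotientGroup.mk' (center G)) h
      rwa [MonoidHom.map_closure, Set.image_pair, map_commutatorElement] at this
    have hle : closure {u, ⁅u, v⁆} ≤ centralizer {u} := by
      rw [closure_le]
      rintro x (rfl | rfl)
      exacts [mem_centralizer_singleton_iff.2 rfl, mem_centralizer_singleton_iff.2 (hc.comm u)]
    exact (mem_centralizer_singleton_iff.1 (hle h)).symm

theorem IsPGroup.commutatorElement_commutatorElement_eq_one_of_engel {p : ℕ} (hp : p.Coprime 3)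
    (hG : IsPGroup p G) (hE : ∀ a b : G, ⁅⁅a, b⁆, b⁆ = 1) (a b c : G) : ⁅⁅a, b⁆, c⁆ = 1 := by
  revert hG hE a b c
  refine Group.nilpotent_center_quotient_ind (P := fun G _ _ ↦ IsPGroup p G →
    (∀ a b : G, ⁅⁅a, b⁆, b⁆ = 1) → ∀ a b c : G, ⁅⁅a, b⁆, c⁆ = 1) G ?_ ?_
  · intro G _ _ _ _ a b c
    exact Subsingleton.elim _ _
  · intro G _ _ ih hG hE
    have hZ : ∀ a b c : G, ⁅⁅a, b⁆, c⁆ ∈ center G := by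
      intro a b c
      rw [← QuotientGroup.eq_one_iff, ← QuotientGroup.mk'_apply, map_commutatorElement,
        map_commutatorElement]
      exact ih (hG.to_quotient _) (QuotientGroup.commutatorElement_commutatorElement_self_eq_one
        fun x y ↦ hE x y ▸ one_mem _) _ _ _
    intro a b c
    have h3 := commutatorElement_commutatorElement_pow_three_eq_one hZ hE a b c
    exact orderOf_eq_one_iff.1 ((hG.orderOf_coprime hp _).eq_one_of_dvd
      (orderOf_dvd_of_pow_eq_one h3))

end Nilpotent

namespace IsMetahamiltonian

variable {G : Type*} [Group G] (hG : IsMetahamiltonian G) {u v : G}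
include hG

theorem closure_pair_normal {x y : G} (hxy : ¬Commute x y) : (closure {x, y}).Normal :=
  hG _ fun _ ↦ hxy <| setLike_mul_comm (s := closure {x, y}) (subset_closure (.inl rfl))
    (subset_closure (.inr rfl))

theorem closure_pair_le_of_isConj (huv : IsConj u v) {w x y : G} (huw : IsConj u w)
    (hxy : ¬Commute x y) (hw : w ∈ closure {x, y}) : closure {u, v} ≤ closure {x, y} := by
  have hK := hG.closure_pair_normal hxy
  have hu := hK.mem_of_isConj huw.symm hw
  rw [closure_le]
  rintro z (rfl | rfl)
  exacts [hu, hK.mem_of_isConj huv hu]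

variable [Group.IsNilpotent G]

theorem commute_commutatorElement_of_isConj (huv : IsConj u v) : Commute u ⁅u, v⁆ := by
  by_contra h
  have hv : v ∈ closure {u, ⁅u, v⁆} := hG.closure_pair_le_of_isConj huv (IsConj.refl u) h
    (subset_closure (.inl rfl)) (subset_closure (.inr rfl))
  rw [(commute_of_mem_closure_commutatorElement hv).commutator_eq] at h
  exact h (Commute.one_right u)

theorem commute_commutatorElement_of_mem_closure (huv : IsConj u v) {h : G}
    (hh : h ∈ closure {u, v}) : Commute h ⁅u, v⁆ := by
  have hv : Commute v ⁅u, v⁆ := by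
    rw [← Commute.inv_right_iff, commutatorElement_inv]
    exact hG.commute_commutatorElement_of_isConj huv.symm
  have hle : closure {u, v} ≤ centralizer {⁅u, v⁆} := by
    rw [closure_le]
    rintro z (rfl | rfl) <;> rw [SetLike.mem_coe, mem_centralizer_singleton_iff]
    exacts [(hG.commute_commutatorElement_of_isConj huv).eq, hv.eq]
  exact mem_centralizer_singleton_iff.1 (hle hh)

theorem commutatorElement_mem_zpowers_of_mem_closure (huv : IsConj u v) {s t : G}
    (hs : s ∈ closure {u, v}) (ht : t ∈ closure {u, v}) : ⁅s, t⁆ ∈ zpowers ⁅u, v⁆ :=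
  commutatorElement_mem_zpowers_of_mem_closure_pair
    (hG.commute_commutatorElement_of_mem_closure huv (subset_closure (.inl rfl)))
    (hG.commute_commutatorElement_of_mem_closure huv (subset_closure (.inr rfl))) hs ht

theorem mem_zpowers_commutatorElement_of_not_commute (huv : IsConj u v) {s w : G}
    (hs : s ∈ closure {u, v}) (huw : IsConj u w) (hw : w ∈ closure {u, v})
    (hsw : ¬Commute s w) : ⁅u, v⁆ ∈ zpowers ⁅s, w⁆ := by
  obtain ⟨k, hk⟩ :=
    mem_zpowers_iff.1 (hG.commutatorElement_mem_zpowers_of_mem_closure huv hs hw)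
  have hcomm : ∀ h ∈ closure {u, v}, Commute h ⁅s, w⁆ := fun h hh ↦
    hk ▸ (hG.commute_commutatorElement_of_mem_closure huv hh).zpow_right k
  have hle := hG.closure_pair_le_of_isConj huv huw hsw (subset_closure (.inr rfl))
  exact commutatorElement_mem_zpowers_of_mem_closure_pair (hcomm s hs) (hcomm w hw)
    (hle (subset_closure (.inl rfl))) (hle (subset_closure (.inr rfl)))

theorem zpowers_commutatorElement_normal (huv : IsConj u v) (hnc : ¬Commute u v) :
    (zpowers ⁅u, v⁆).Normal := by
  have hH := hG.closure_pair_normal hnc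
  refine ⟨fun x hx t ↦ ?_⟩
  obtain ⟨k, rfl⟩ := mem_zpowers_iff.1 hx
  rw [← conj_zpow, conjugate_commutatorElement]
  exact zpow_mem (hG.commutatorElement_mem_zpowers_of_mem_closure huv
    (hH.conj_mem _ (subset_closure (.inl rfl)) t)
    (hH.conj_mem _ (subset_closure (.inr rfl)) t)) k

theorem exists_commutatorElement_eq_zpow_mul_zpow (huv : IsConj u v) (hnc : ¬Commute u v)
    {g w : G} (hR : (closure {⁅u, v⁆, g}).Normal) (hw : w ∈ closure {u, v}) :
    ∃ k i : ℤ, ⁅g, w⁆ = ⁅u, v⁆ ^ k * g ^ i ∧ g ^ i ∈ closure {u, v} := by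
  have hH := hG.closure_pair_normal hnc
  obtain ⟨k, i, hki⟩ := exists_zpow_mul_zpow_of_mem_closure_pair
    (hG.zpowers_commutatorElement_normal huv hnc)
    (hR.commutatorElement_mem_left (subset_closure (.inr rfl)) w)
  refine ⟨k, i, hki, ?_⟩
  rw [show g ^ i = (⁅u, v⁆ ^ k)⁻¹ * ⁅g, w⁆ by rw [hki, inv_mul_cancel_left]]
  exact mul_mem (inv_mem (zpow_mem (hH.commutatorElement_mem_left (subset_closure (.inl rfl))
    v) k)) (hH.commutatorElement_mem_right hw g)

theorem commute_commutatorElement_of_not_commute_zpow (huv : IsConj u v) {g w : G} {i : ℤ}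
    (hR : (closure {⁅u, v⁆, g}).Normal) (hi : g ^ i ∈ closure {u, v}) (huw : IsConj u w)
    (hw : w ∈ closure {u, v}) (hsw : ¬Commute (g ^ i) w) : Commute g ⁅u, v⁆ := by
  by_cases hnc : Commute u v
  · rw [hnc.commutator_eq]
    exact Commute.one_right g
  obtain ⟨k, j, hkj, -⟩ := hG.exists_commutatorElement_eq_zpow_mul_zpow huv hnc hR hw
  have hr : ⁅g, w⁆ ∈ closure {u, v} :=
    (hG.closure_pair_normal hnc).commutatorElement_mem_right hw g
  obtain ⟨e, he⟩ :=
    mem_zpowers_iff.1 (hG.mem_zpowers_commutatorElement_of_not_commute huv hi huw hw hsw)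
  obtain ⟨m, hm⟩ :=
    mem_zpowers_iff.1 (hG.commutatorElement_mem_zpowers_of_mem_closure huv hi hw)
  rw [← he]
  refine (commute_commutatorElement_of_conj_eq_mul ((Commute.refl g).zpow_right i)
    (r := ⁅g, w⁆) (by rw [← MulAut.conj_apply, conj_eq_commutatorElement_mul]) ?_ ?_).zpow_right e
  · rw [hkj]
    exact ((hG.commute_commutatorElement_of_mem_closure huv hi).zpow_right k).mul_right
      ((Commute.refl g).zpow_zpow i j)
  · rw [← hm]
    exact (hG.commute_commutatorElement_of_mem_closure huv hr).zpow_right m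

theorem commutatorElement_mem_center_of_isConj (huv : IsConj u v) : ⁅u, v⁆ ∈ center G := by
  rw [mem_center_iff]
  intro g
  by_cases hgc : Commute g ⁅u, v⁆
  · exact hgc.eq
  have hnc : ¬Commute u v := fun h ↦ hgc (h.commutator_eq ▸ Commute.one_right g)
  have hR := hG.closure_pair_normal (x := ⁅u, v⁆) (y := g) fun h ↦ hgc h.symm
  have hu : u ∈ closure {u, v} := subset_closure (.inl rfl)
  have hv : v ∈ closure {u, v} := subset_closure (.inr rfl)
  have hpow : ∀ i : ℤ, g ^ i ∈ closure {u, v} → ∀ h ∈ closure {u, v}, Commute (g ^ i) h := by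
    intro i hi h hh
    have hle : closure {u, v} ≤ centralizer {g ^ i} := by
      rw [closure_le]
      intro w hw
      rw [SetLike.mem_coe, mem_centralizer_singleton_iff]
      by_contra hsw
      have huw : IsConj u w := by rcases hw with hw | hw <;> subst w; exacts [IsConj.refl u, huv]
      exact hgc (hG.commute_commutatorElement_of_not_commute_zpow huv hR hi huw
        (subset_closure hw) fun h ↦ hsw h.eq.symm)
    exact (mem_centralizer_singleton_iff.1 (hle hh)).symm
  have hcen : ∀ w ∈ closure {u, v}, ∀ h ∈ closure {u, v}, Commute ⁅g, w⁆ h := by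
    intro w hw h hh
    obtain ⟨k, i, hki, hi⟩ := hG.exists_commutatorElement_eq_zpow_mul_zpow huv hnc hR hw
    rw [hki]
    exact ((hG.commute_commutatorElement_of_mem_closure huv hh).symm.zpow_left k).mul_left
      (hpow i hi h hh)
  rw [← mul_inv_eq_iff_eq_mul, conjugate_commutatorElement, ← MulAut.conj_apply,
    conj_eq_commutatorElement_mul, ← MulAut.conj_apply, conj_eq_commutatorElement_mul]
  exact commutatorElement_mul_mul_of_commute (hcen u hu) (hcen v hv)
    ((hG.closure_pair_normal hnc).commutatorElement_mem_right hv g) hu hv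

theorem commutatorElement_commutatorElement_self_mem_center (x y : G) :
    ⁅⁅x, y⁆, y⁆ ∈ center G := by
  rw [show ⁅⁅x, y⁆, y⁆ = ⁅x * y * x⁻¹, y⁆ by simp only [commutatorElement_def]; group]
  exact hG.commutatorElement_mem_center_of_isConj (isConj_iff.2 ⟨x, rfl⟩).symm

end IsMetahamiltonian

/-- For a finite metahamiltonian p-group with p ≠ 3, the quotient G/Z(G) has
nilpotency class at most 2. -/
theorem metahamiltonian_quotient_center_class_le_two {p : ℕ} (hp : p.Prime)
    (hp3 : p ≠ 3) (G : Type*) [Group G] [Finite G] (hG : IsPGroup p G)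
    (hmh : ∀ H : Subgroup G, ¬IsMulCommutative H → H.Normal) :
    (⊤ : Subgroup (G ⧸ Subgroup.center G)).lowerCentralSeries 2 = ⊥ := by
  have : Fact p.Prime := ⟨hp⟩
  have : Group.IsNilpotent G := hG.isNilpotent
  have hQ := hG.to_quotient (center G)
  have : Group.IsNilpotent (G ⧸ center G) := hQ.isNilpotent
  have hE := QuotientGroup.commutatorElement_commutatorElement_self_eq_one
    (IsMetahamiltonian.commutatorElement_commutatorElement_self_mem_center hmh)
  exact top_lowerCentralSeries_two_eq_bot_iff.2
    (hQ.commutatorElement_commutatorElement_eq_one_of_engel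
      ((Nat.coprime_primes hp Nat.prime_three).2 hp3) hE)
end
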